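/- arXiv:2506.22269 — 6 statements merged into one kernel-verified Lean document; each statement's English description precedes it below -/
import Mathlib

section
/- Let G be a finite simple graph on n vertices that is traceable (contains a Hamiltonian path), and let p ≥ 1 be the size of a maximum induced matching of G. Then G contains at least n²/(8p) edges. -/
open Finset SimpleGraph

lemma turan_aux {W : Type*} [DecidableEq W] (R : W → W → Prop) [DecidableRel R]
    (hsym : ∀ a b, R a b → R b a) (hirr : ∀ a, ¬ R a a) :
    ∀ (p : ℕ) (s : Finset W),
      (∀ S : Finset W, S ⊆ s → (∀ a ∈ S, ∀ b ∈ S, a ≠ b → ¬ R a b) → S.card ≤ p) →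
      (s.card : ℝ) ^ 2 / p ≤ s.card + ((s ×ˢ s).filter fun ab => R ab.1 ab.2).card := by
  intro p
  induction p with
  | zero =>
    intro s hs
    have hse : s = ∅ := by
      by_contra h
      obtain ⟨x, hx⟩ := Finset.nonempty_iff_ne_empty.2 h
      have := hs {x} (by simpa) (by intro a ha b hb hab; simp at ha hb; subst ha; subst hb; exact absurd rfl hab)
      simp at this
    subst hse; simp
  | succ p ih =>
    intro s hs
    rcases s.eq_empty_or_nonempty with rfl | hne
    · simp
    obtain ⟨v, hv, hmin⟩ := Finset.exists_min_image s (fun w => (s.filter (fun b => R w b)).card) hne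
    set d := (s.filter (fun b => R v b)).card with hd
    set T := insert v (s.filter (fun b => R v b)) with hT
    have hvnot : v ∉ s.filter (fun b => R v b) := by simp [hirr v]
    have hTcard : T.card = d + 1 := by rw [hT, Finset.card_insert_of_notMem hvnot]
    have hTs : T ⊆ s := by rw [hT]; exact Finset.insert_subset hv (Finset.filter_subset _ _)
    set s' := s \ T with hs'
    have hs'hyp : ∀ S : Finset W, S ⊆ s' →
        (∀ a ∈ S, ∀ b ∈ S, a ≠ b → ¬ R a b) → S.card ≤ p := by
      intro S hSs hSind
      have hvS : v ∉ S := fun h => (Finset.mem_sdiff.1 (hSs h)).2 (Finset.mem_insert_self v _)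
      have h1 : insert v S ⊆ s := Finset.insert_subset hv (hSs.trans Finset.sdiff_subset)
      have h2 : ∀ a ∈ insert v S, ∀ b ∈ insert v S, a ≠ b → ¬ R a b := by
        intro a ha b hb hab
        rcases Finset.mem_insert.1 ha with rfl | ha' <;> rcases Finset.mem_insert.1 hb with rfl | hb'
        · exact absurd rfl hab
        · intro hR
          exact (Finset.mem_sdiff.1 (hSs hb')).2
            (Finset.mem_insert_of_mem (Finset.mem_filter.2 ⟨Finset.sdiff_subset (hSs hb'), hR⟩))
        · intro hR
          exact (Finset.mem_sdiff.1 (hSs ha')).2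
            (Finset.mem_insert_of_mem (Finset.mem_filter.2 ⟨Finset.sdiff_subset (hSs ha'), hsym _ _ hR⟩))
        · exact hSind a ha' b hb' hab
      have := hs (insert v S) h1 h2
      rw [Finset.card_insert_of_notMem hvS] at this; omega
    have IH := ih s' hs'hyp
    have hA : ((T ×ˢ s).filter fun ab => R ab.1 ab.2).card
        = ∑ w ∈ T, (s.filter fun b => R w b).card := by
      rw [Finset.card_filter, Finset.sum_product]
      exact Finset.sum_congr rfl fun w _ => (Finset.card_filter _ _).symm
    have hAge : (d + 1) * d ≤ ((T ×ˢ s).filter fun ab => R ab.1 ab.2).card := by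
      rw [hA]
      calc (d + 1) * d = ∑ _w ∈ T, d := by rw [Finset.sum_const, hTcard, smul_eq_mul]
        _ ≤ _ := Finset.sum_le_sum fun w hw => hmin w (hTs hw)
    have hdisj : Disjoint ((T ×ˢ s).filter fun ab => R ab.1 ab.2)
        ((s' ×ˢ s').filter fun ab => R ab.1 ab.2) := by
      rw [Finset.disjoint_left]
      intro ab h1 h2
      have ha1 := (Finset.mem_product.1 (Finset.mem_filter.1 h1).1).1
      have ha2 := (Finset.mem_product.1 (Finset.mem_filter.1 h2).1).1
      exact (Finset.mem_sdiff.1 ha2).2 ha1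
    have hsplit : ((T ×ˢ s).filter fun ab => R ab.1 ab.2).card
        + ((s' ×ˢ s').filter fun ab => R ab.1 ab.2).card
        ≤ ((s ×ˢ s).filter fun ab => R ab.1 ab.2).card := by
      rw [← Finset.card_union_of_disjoint hdisj]
      apply Finset.card_le_card
      apply Finset.union_subset
      · exact Finset.filter_subset_filter _ (Finset.product_subset_product hTs (Finset.Subset.refl s))
      · exact Finset.filter_subset_filter _
          (Finset.product_subset_product Finset.sdiff_subset Finset.sdiff_subset)
    have hTle : d + 1 ≤ s.card := hTcard ▸ Finset.card_le_card hTs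
    have hs'card : s'.card = s.card - (d + 1) := by rw [hs', Finset.card_sdiff_of_subset hTs, hTcard]
    have hcast : (s'.card : ℝ) = (s.card : ℝ) - (d + 1) := by
      rw [hs'card]; push_cast [hTle]; ring
    rcases Nat.eq_zero_or_pos p with rfl | hp
    · have hs'e : s' = ∅ := by
        by_contra h
        obtain ⟨x, hx⟩ := Finset.nonempty_iff_ne_empty.2 h
        have := hs'hyp {x} (by simpa)
          (by intro a ha b hb hab; simp at ha hb; subst ha; subst hb; exact absurd rfl hab)
        simp at this
      have hA0 : s'.card = 0 := by rw [hs'e]; simp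
      have hAeq : s.card = d + 1 := by omega
      have hDge : (d + 1) * d ≤ ((s ×ˢ s).filter fun ab => R ab.1 ab.2).card := by omega
      have hD : ((d + 1 : ℕ) * d : ℝ) ≤ (((s ×ˢ s).filter fun ab => R ab.1 ab.2).card : ℝ) := by
        exact_mod_cast hDge
      rw [hAeq]
      push_cast at hD ⊢
      rw [div_le_iff₀ (by norm_num)]
      nlinarith
    · have hp' : (0 : ℝ) < p := by exact_mod_cast hp
      rw [div_le_iff₀ hp'] at IH
      have hD : (((s' ×ˢ s').filter fun ab => R ab.1 ab.2).card : ℝ) + ((d:ℝ) + 1) * d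
          ≤ (((s ×ˢ s).filter fun ab => R ab.1 ab.2).card : ℝ) := by
        have : ((s' ×ˢ s').filter fun ab => R ab.1 ab.2).card + (d + 1) * d
            ≤ ((s ×ˢ s).filter fun ab => R ab.1 ab.2).card := by omega
        exact_mod_cast this
      have hp1 : (1:ℝ) ≤ (p:ℝ) := by exact_mod_cast hp
      have hx : (0:ℝ) ≤ (s'.card : ℝ) := Nat.cast_nonneg _
      have hD'0 : (0:ℝ) ≤ (((s' ×ˢ s').filter fun ab => R ab.1 ab.2).card : ℝ) := Nat.cast_nonneg _
      push_cast
      rw [div_le_iff₀ (by positivity : (0:ℝ) < ((p:ℝ)+1))]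
      set x := (s'.card : ℝ) with hxdef
      set D' := (((s' ×ˢ s').filter fun ab => R ab.1 ab.2).card : ℝ) with hD'def
      set D := (((s ×ˢ s).filter fun ab => R ab.1 ab.2).card : ℝ) with hDdef
      set u := (d : ℝ) + 1 with hudef
      have e2 : 2 * x * u * (p:ℝ) ≤ x^2 + (p:ℝ)^2 * u^2 := by nlinarith [sq_nonneg (x - (p:ℝ)*u)]
      have e3 : 2 * x * u ≤ (x + D') + (p:ℝ) * u^2 := by
        have h := add_le_add IH (le_refl ((p:ℝ)^2 * u^2))
        have h2 : 2 * x * u * (p:ℝ) ≤ ((x + D') + (p:ℝ) * u^2) * (p:ℝ) := by nlinarith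
        exact le_of_mul_le_mul_right (by linarith [h2]) hp'
      have e4 : x + u + D ≥ x + D' + u^2 := by nlinarith [hD]
      have e5 : (x + D' + u^2) * ((p:ℝ)+1) ≤ (x + u + D) * ((p:ℝ)+1) := by
        apply mul_le_mul_of_nonneg_right e4 (by linarith)
      have hcA : (s.card : ℝ) = x + u := by rw [hcast]; ring
      rw [hcA]
      have e6 : (x+u)^2 ≤ (x + D' + u^2) * ((p:ℝ)+1) := by
        have h6 : (x+u)^2 = x^2 + 2*x*u + u^2 := by ring
        have h7 : (x + D' + u^2) * ((p:ℝ)+1) = (x+D')*(p:ℝ) + ((x + D') + (p:ℝ)*u^2) + u^2 := by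
          ring
        rw [h6, h7]; linarith [IH, e3]
      linarith [e6, e5]


lemma getVert_eq_support_getElem' {V : Type*} {G : SimpleGraph V} {u v : V} (w : G.Walk u v)
    {i : ℕ} (h : i ≤ w.length) :
    w.getVert i = w.support[i]'(by rw [SimpleGraph.Walk.length_support]; omega) := by
  induction w generalizing i with
  | nil =>
    simp only [SimpleGraph.Walk.length_nil, Nat.le_zero] at h
    subst h
    simp [SimpleGraph.Walk.getVert_zero]
  | cons ha q ih =>
    cases i with
    | zero => simp [SimpleGraph.Walk.getVert_zero]
    | succ n =>
      rw [SimpleGraph.Walk.getVert_cons_succ]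
      simp only [SimpleGraph.Walk.support_cons, List.getElem_cons_succ]
      exact ih (by simpa [SimpleGraph.Walk.length_cons] using h)

lemma getVert_injOn_of_isPath' {V : Type*} {G : SimpleGraph V} {u v : V} {w : G.Walk u v}
    (hw : w.IsPath) {i j : ℕ} (hi : i ≤ w.length) (hj : j ≤ w.length)
    (hij : w.getVert i = w.getVert j) : i = j := by
  rw [getVert_eq_support_getElem' w hi, getVert_eq_support_getElem' w hj] at hij
  exact hw.support_nodup.getElem_inj_iff.1 hij

/-- A graph is traceable if it contains a Hamiltonian path. -/
def Traceable {V : Type*} [DecidableEq V] (G : SimpleGraph V) : Prop :=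
  ∃ (u v : V) (p : G.Walk u v), p.IsHamiltonian

/-- `M` is an induced matching of `G`: a set of pairwise vertex-disjoint edges of `G` such that
the subgraph induced by the endpoints of the edges of `M` contains exactly the edges of `M`. -/
def IsInducedMatching {V : Type*} (G : SimpleGraph V) (M : Finset (Sym2 V)) : Prop :=
  (∀ e ∈ M, e ∈ G.edgeSet) ∧
  (∀ e ∈ M, ∀ f ∈ M, e ≠ f → ∀ v : V, v ∈ e → v ∉ f) ∧
  (∀ u v : V, G.Adj u v → (∃ e ∈ M, u ∈ e) → (∃ f ∈ M, v ∈ f) → s(u, v) ∈ M)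

/-- A traceable graph on `n` vertices whose maximum induced matching has size `p ≥ 1`
contains at least `n² / (8p)` edges. -/
theorem stmt_0 {V : Type*} [Fintype V] [DecidableEq V] (G : SimpleGraph V)
    (hG : Traceable G) (p : ℕ) (hp : 1 ≤ p)
    (hmax : ∃ M : Finset (Sym2 V), IsInducedMatching G M ∧ M.card = p)
    (hbnd : ∀ M : Finset (Sym2 V), IsInducedMatching G M → M.card ≤ p) :
    (Fintype.card V : ℝ) ^ 2 / (8 * p) ≤ (G.edgeSet.ncard : ℝ) := by
  classical
  obtain ⟨u0, v0, w, hw⟩ := hG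
  set f : ℕ → V := w.getVert with hfdef
  set N := w.length with hNdef
  have hpath : w.IsPath := hw.isPath
  have hinj : ∀ i ≤ N, ∀ j ≤ N, f i = f j → i = j := fun i hi j hj hij =>
    getVert_injOn_of_isPath' hpath hi hj hij
  have hadj : ∀ i < N, G.Adj (f i) (f (i + 1)) := fun i hi => w.adj_getVert_succ hi
  have hcardV : Fintype.card V = N + 1 := by
    have h1 := hw.length_eq
    have h2 : 0 < Fintype.card V := Fintype.card_pos_iff.2 ⟨u0⟩
    omega
  have hsurj : ∀ x : V, ∃ k, f k = x ∧ k ≤ N := by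
    intro x
    rw [← SimpleGraph.Walk.mem_support_iff_exists_getVert]
    exact hw.mem_support x
  have hm : (G.edgeSet.ncard : ℝ) = (G.edgeFinset.card : ℝ) := by
    rw [← SimpleGraph.coe_edgeFinset, Set.ncard_coe_finset]
  obtain ⟨M0, hM0, hM0card⟩ := hmax
  have hpm : p ≤ G.edgeFinset.card := by
    rw [← hM0card]
    exact Finset.card_le_card (fun e he => SimpleGraph.mem_edgeFinset.2 (hM0.1 e he))
  have hp1 : (1 : ℝ) ≤ (p : ℝ) := by exact_mod_cast hp
  rw [hm, hcardV]
  rcases Nat.eq_zero_or_pos N with hN0 | hNpos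
  · rw [hN0]
    have h1 : (1 : ℝ) ≤ (G.edgeFinset.card : ℝ) := by exact_mod_cast le_trans hp hpm
    push_cast
    rw [div_le_iff₀ (by positivity)]
    nlinarith
  -- main case
  set R : ℕ → ℕ → Prop := fun i j => i ≠ j ∧
    ∃ a b : V, (a = f i ∨ a = f (i + 1)) ∧ (b = f j ∨ b = f (j + 1)) ∧ G.Adj a b with hRdef
  have hsym : ∀ a b, R a b → R b a := by
    rintro i j ⟨hne, a, b, ha, hb, hab⟩
    exact ⟨hne.symm, b, a, hb, ha, hab.symm⟩
  have hirr : ∀ a, ¬ R a a := fun a h => h.1 rfl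
  -- distinct indices sharing a vertex are R-related, provided both < N
  have hshare : ∀ i < N, ∀ j < N, i ≠ j → ∀ x : V,
      (x = f i ∨ x = f (i + 1)) → (x = f j ∨ x = f (j + 1)) → R i j := by
    intro i hi j hj hij x hxi hxj
    refine ⟨hij, ?_⟩
    rcases hxi with rfl | rfl <;> rcases hxj with h | h
    · exact absurd (hinj i (by omega) j (by omega) h) hij
    · exact ⟨f i, f j, Or.inl rfl, Or.inl rfl, h ▸ (hadj j hj).symm⟩
    · exact ⟨f i, f j, Or.inl rfl, Or.inl rfl, h ▸ hadj i hi⟩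
    · exact absurd (by have := hinj (i+1) (by omega) (j+1) (by omega) h; omega) hij
  -- independent sets give induced matchings
  have hindep : ∀ S : Finset ℕ, S ⊆ Finset.range N →
      (∀ a ∈ S, ∀ b ∈ S, a ≠ b → ¬ R a b) → S.card ≤ p := by
    intro S hS hind
    have hiN : ∀ i ∈ S, i < N := fun i hi => Finset.mem_range.1 (hS hi)
    set M : Finset (Sym2 V) := S.image (fun i => s(f i, f (i + 1))) with hMdef
    have hMmem : ∀ e ∈ M, ∃ i ∈ S, e = s(f i, f (i + 1)) := by
      intro e he
      obtain ⟨i, hi, hei⟩ := Finset.mem_image.1 he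
      exact ⟨i, hi, hei.symm⟩
    have hMcard : M.card = S.card := by
      apply Finset.card_image_of_injOn
      intro i hi j hj hss
      by_contra hij
      have : R i j := by
        apply hshare i (hiN i hi) j (hiN j hj) hij (f i) (Or.inl rfl)
        have hss2 : s(f i, f (i + 1)) = s(f j, f (j + 1)) := hss
        have : f i ∈ s(f j, f (j + 1)) := by rw [← hss2]; exact Sym2.mem_mk_left _ _
        rwa [Sym2.mem_iff] at this
      exact hind i hi j hj hij this
    have hIM : IsInducedMatching G M := by
      refine ⟨?_, ?_, ?_⟩
      · intro e he
        obtain ⟨i, hi, rfl⟩ := hMmem e he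
        exact hadj i (hiN i hi)
      · intro e he e' he' hne x hxe hxe'
        obtain ⟨i, hi, rfl⟩ := hMmem e he
        obtain ⟨j, hj, rfl⟩ := hMmem e' he'
        have hij : i ≠ j := fun h => hne (by rw [h])
        rw [Sym2.mem_iff] at hxe hxe'
        exact hind i hi j hj hij (hshare i (hiN i hi) j (hiN j hj) hij x hxe hxe')
      · rintro a b hab ⟨e, he, hae⟩ ⟨e', he', hbe'⟩
        obtain ⟨i, hi, rfl⟩ := hMmem e he
        obtain ⟨j, hj, rfl⟩ := hMmem e' he'
        rw [Sym2.mem_iff] at hae hbe'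
        by_cases hij : i = j
        · subst hij
          have hne : a ≠ b := hab.ne
          rcases hae with rfl | rfl <;> rcases hbe' with rfl | rfl
          · exact absurd rfl hne
          · exact Finset.mem_image.2 ⟨i, hi, rfl⟩
          · rw [Sym2.eq_swap]; exact Finset.mem_image.2 ⟨i, hi, rfl⟩
          · exact absurd rfl hne
        · exact absurd ⟨hij, a, b, hae, hbe', hab⟩ (hind i hi j hj hij)
    calc S.card = M.card := hMcard.symm
      _ ≤ p := hbnd M hIM
  letI : DecidableRel R := Classical.decRel R
  have hturan := turan_aux R hsym hirr p (Finset.range N) hindep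
  rw [Finset.card_range] at hturan
  -- path edges and chords
  set pathEdges : Finset (Sym2 V) := (Finset.range N).image (fun i => s(f i, f (i + 1)))
    with hPEdef
  have hpe_sub : pathEdges ⊆ G.edgeFinset := by
    intro e he
    obtain ⟨i, hi, rfl⟩ := Finset.mem_image.1 he
    exact SimpleGraph.mem_edgeFinset.2 (hadj i (Finset.mem_range.1 hi))
  have hpe_card : pathEdges.card = N := by
    rw [hPEdef, Finset.card_image_of_injOn, Finset.card_range]
    intro i hi j hj hss
    rw [Finset.coe_range, Set.mem_Iio] at hi hj
    rw [Sym2.eq_iff] at hss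
    rcases hss with ⟨h1, _⟩ | ⟨h1, h2⟩
    · exact hinj i (by omega) j (by omega) h1
    · have e1 := hinj i (by omega) (j + 1) (by omega) h1
      have e2 := hinj (i + 1) (by omega) j (by omega) h2
      omega
  set chords : Finset (Sym2 V) := G.edgeFinset \ pathEdges with hCdef
  have hchord : chords.card + N = G.edgeFinset.card := by
    rw [hCdef, ← hpe_card]
    exact Finset.card_sdiff_add_card_eq_card hpe_sub
  set Df : Finset (ℕ × ℕ) := (Finset.range N ×ˢ Finset.range N).filter
    (fun ab => R ab.1 ab.2) with hDfdef
  have hsplitD : (Df.filter (fun ab => ab.1 < ab.2 + 3 ∧ ab.2 < ab.1 + 3)).card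
      + (Df.filter (fun ab => ¬(ab.1 < ab.2 + 3 ∧ ab.2 < ab.1 + 3))).card = Df.card :=
    Finset.card_filter_add_card_filter_not _
  -- near bound
  have hnear : (Df.filter (fun ab => ab.1 < ab.2 + 3 ∧ ab.2 < ab.1 + 3)).card ≤ 4 * N := by
    set near := Df.filter (fun ab => ab.1 < ab.2 + 3 ∧ ab.2 < ab.1 + 3) with hneardef
    have hfib : ∀ i ∈ near.image Prod.fst, (near.filter (fun ab => ab.1 = i)).card ≤ 4 := by
      intro i _
      have hsub : near.filter (fun ab => ab.1 = i)
          ⊆ ({i} : Finset ℕ) ×ˢ ({i + 1, i + 2, i - 1, i - 2} : Finset ℕ) := by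
        rintro ⟨a1, a2⟩ hab
        obtain ⟨habn, h2⟩ := Finset.mem_filter.1 hab
        obtain ⟨habD, hcl⟩ := Finset.mem_filter.1 habn
        obtain ⟨-, hR'⟩ := Finset.mem_filter.1 habD
        have hne : a1 ≠ a2 := hR'.1
        simp only [Finset.mem_product, Finset.mem_singleton, Finset.mem_insert] at *
        omega
      refine le_trans (Finset.card_le_card hsub) ?_
      rw [Finset.card_product, Finset.card_singleton, one_mul]
      refine le_trans (Finset.card_insert_le _ _) ?_
      refine le_trans (Nat.add_le_add_right (Finset.card_insert_le _ _) 1) ?_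
      refine le_trans (Nat.add_le_add_right (Nat.add_le_add_right (Finset.card_insert_le _ _) 1) 1) ?_
      simp
    have himg : near.image Prod.fst ⊆ Finset.range N := by
      intro i hi
      obtain ⟨ab, hab, rfl⟩ := Finset.mem_image.1 hi
      have habD := (Finset.mem_filter.1 hab).1
      exact (Finset.mem_product.1 (Finset.mem_filter.1 habD).1).1
    refine le_trans (Finset.card_le_mul_card_image near 4 hfib) ?_
    have := Finset.card_le_card himg
    rw [Finset.card_range] at this
    omega
  -- far bound
  set g : ℕ × ℕ → Sym2 V := fun ab =>
    if h : ∃ a b : V, (a = f ab.1 ∨ a = f (ab.1 + 1)) ∧ (b = f ab.2 ∨ b = f (ab.2 + 1)) ∧ G.Adj a b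
    then s(h.choose, h.choose_spec.choose) else s(u0, u0) with hgdef
  have hg : ∀ i j : ℕ,
      ∀ h : (∃ a b : V, (a = f i ∨ a = f (i + 1)) ∧ (b = f j ∨ b = f (j + 1)) ∧ G.Adj a b),
      ∃ a b : V, (a = f i ∨ a = f (i + 1)) ∧ (b = f j ∨ b = f (j + 1)) ∧ G.Adj a b ∧
        g (i, j) = s(a, b) := by
    intro i j h
    refine ⟨h.choose, h.choose_spec.choose, h.choose_spec.choose_spec.1,
      h.choose_spec.choose_spec.2.1, h.choose_spec.choose_spec.2.2, ?_⟩
    rw [hgdef]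
    exact dif_pos h
  have hfar : (Df.filter (fun ab => ¬(ab.1 < ab.2 + 3 ∧ ab.2 < ab.1 + 3))).card
      ≤ 8 * chords.card := by
    set Far := Df.filter (fun ab => ¬(ab.1 < ab.2 + 3 ∧ ab.2 < ab.1 + 3)) with hFardef
    have hmemFar : ∀ ab ∈ Far, ab.1 < N ∧ ab.2 < N ∧ ab.1 ≠ ab.2 ∧
        (∃ a b : V, (a = f ab.1 ∨ a = f (ab.1 + 1)) ∧ (b = f ab.2 ∨ b = f (ab.2 + 1)) ∧ G.Adj a b)
        ∧ (ab.2 + 3 ≤ ab.1 ∨ ab.1 + 3 ≤ ab.2) := by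
      intro ab hab
      obtain ⟨habD, hfarc⟩ := Finset.mem_filter.1 hab
      obtain ⟨hprod, hR'⟩ := Finset.mem_filter.1 habD
      obtain ⟨h1, h2⟩ := Finset.mem_product.1 hprod
      refine ⟨Finset.mem_range.1 h1, Finset.mem_range.1 h2, hR'.1, hR'.2, by omega⟩
    have himg : Far.image g ⊆ chords := by
      intro c hc
      obtain ⟨ab, hab, rfl⟩ := Finset.mem_image.1 hc
      obtain ⟨i, j⟩ := ab
      obtain ⟨hiN, hjN, hijne, hconf, hfarc⟩ := hmemFar _ hab
      obtain ⟨a, b, ha, hb, hab', hgeq⟩ := hg i j hconf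
      rw [hgeq]
      rw [hCdef, Finset.mem_sdiff]
      refine ⟨SimpleGraph.mem_edgeFinset.2 hab', ?_⟩
      intro hmem
      obtain ⟨t, ht, hteq⟩ := Finset.mem_image.1 hmem
      have htN : t < N := Finset.mem_range.1 ht
      rw [Sym2.eq_iff] at hteq
      rcases hteq with ⟨h1, h2⟩ | ⟨h1, h2⟩
      · have hti : t = i ∨ t = i + 1 := by
          rcases ha with rfl | rfl
          · exact Or.inl (hinj t (by omega) i (by omega) h1)
          · exact Or.inr (hinj t (by omega) (i + 1) (by omega) h1)
        have htj : t + 1 = j ∨ t + 1 = j + 1 := by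
          rcases hb with rfl | rfl
          · exact Or.inl (hinj (t + 1) (by omega) j (by omega) h2)
          · exact Or.inr (hinj (t + 1) (by omega) (j + 1) (by omega) h2)
        omega
      · have htj : t = j ∨ t = j + 1 := by
          rcases hb with rfl | rfl
          · exact Or.inl (hinj t (by omega) j (by omega) h1)
          · exact Or.inr (hinj t (by omega) (j + 1) (by omega) h1)
        have hti : t + 1 = i ∨ t + 1 = i + 1 := by
          rcases ha with rfl | rfl
          · exact Or.inl (hinj (t + 1) (by omega) i (by omega) h2)
          · exact Or.inr (hinj (t + 1) (by omega) (i + 1) (by omega) h2)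
        omega
    have hpair2 : ∀ a b : ℕ, ({a, b} : Finset ℕ).card ≤ 2 := by
      intro a b
      refine le_trans (Finset.card_insert_le _ _) ?_
      simp
    have hfib : ∀ c ∈ Far.image g, (Far.filter (fun ab => g ab = c)).card ≤ 8 := by
      intro c hc
      obtain ⟨ab0, hab0, rfl⟩ := Finset.mem_image.1 hc
      obtain ⟨i0, j0⟩ := ab0
      obtain ⟨hi0N, hj0N, hij0ne, hconf0, hfarc0⟩ := hmemFar _ hab0
      obtain ⟨x, y, hx, hy, hxy, hg0⟩ := hg i0 j0 hconf0
      obtain ⟨kx, hkx, hkxN⟩ := hsurj x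
      obtain ⟨ky, hky, hkyN⟩ := hsurj y
      rw [hg0]
      have hsub : Far.filter (fun ab => g ab = s(x, y)) ⊆
          (({kx - 1, kx} : Finset ℕ) ×ˢ ({ky - 1, ky} : Finset ℕ))
          ∪ (({ky - 1, ky} : Finset ℕ) ×ˢ ({kx - 1, kx} : Finset ℕ)) := by
        rintro ⟨i, j⟩ habf
        obtain ⟨habF, heq⟩ := Finset.mem_filter.1 habf
        obtain ⟨hiN, hjN, hijne, hconf, hfarc⟩ := hmemFar _ habF
        obtain ⟨a, b, ha, hb, hab', hgeq⟩ := hg i j hconf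
        rw [hgeq, Sym2.eq_iff] at heq
        rcases heq with ⟨hax, hby⟩ | ⟨hay, hbx⟩
        · apply Finset.mem_union_left
          rw [Finset.mem_product]
          constructor
          · have : i = kx ∨ i + 1 = kx := by
              rcases ha with rfl | rfl
              · exact Or.inl (hinj i (by omega) kx (by omega) (by rw [hax, hkx]))
              · exact Or.inr (hinj (i + 1) (by omega) kx (by omega) (by rw [hax, hkx]))
            simp only [Finset.mem_insert, Finset.mem_singleton]
            omega
          · have : j = ky ∨ j + 1 = ky := by
              rcases hb with rfl | rfl
              · exact Or.inl (hinj j (by omega) ky (by omega) (by rw [hby, hky]))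
              · exact Or.inr (hinj (j + 1) (by omega) ky (by omega) (by rw [hby, hky]))
            simp only [Finset.mem_insert, Finset.mem_singleton]
            omega
        · apply Finset.mem_union_right
          rw [Finset.mem_product]
          constructor
          · have : i = ky ∨ i + 1 = ky := by
              rcases ha with rfl | rfl
              · exact Or.inl (hinj i (by omega) ky (by omega) (by rw [hay, hky]))
              · exact Or.inr (hinj (i + 1) (by omega) ky (by omega) (by rw [hay, hky]))
            simp only [Finset.mem_insert, Finset.mem_singleton]
            omega
          · have : j = kx ∨ j + 1 = kx := by
              rcases hb with rfl | rfl
              · exact Or.inl (hinj j (by omega) kx (by omega) (by rw [hbx, hkx]))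
              · exact Or.inr (hinj (j + 1) (by omega) kx (by omega) (by rw [hbx, hkx]))
            simp only [Finset.mem_insert, Finset.mem_singleton]
            omega
      refine le_trans (Finset.card_le_card hsub) ?_
      refine le_trans (Finset.card_union_le _ _) ?_
      have h1 := Nat.mul_le_mul (hpair2 (kx - 1) kx) (hpair2 (ky - 1) ky)
      have h2 := Nat.mul_le_mul (hpair2 (ky - 1) ky) (hpair2 (kx - 1) kx)
      rw [Finset.card_product, Finset.card_product]
      omega
    refine le_trans (Finset.card_le_mul_card_image Far 8 hfib) ?_
    have := Finset.card_le_card himg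
    omega
  -- final arithmetic
  have hDle : Df.card ≤ 4 * N + 8 * chords.card := by omega
  have hNp : (1 : ℝ) ≤ (N : ℝ) := by exact_mod_cast hNpos
  have hc0 : (0 : ℝ) ≤ (chords.card : ℝ) := Nat.cast_nonneg _
  have hmc : (G.edgeFinset.card : ℝ) = (chords.card : ℝ) + N := by exact_mod_cast hchord.symm
  have hDle' : (Df.card : ℝ) ≤ 4 * N + 8 * chords.card := by exact_mod_cast hDle
  rw [hmc]
  have hp0 : (0:ℝ) < (p:ℝ) := by exact_mod_cast Nat.lt_of_lt_of_le Nat.one_pos hp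
  rw [div_le_iff₀ hp0] at hturan
  push_cast
  rw [div_le_iff₀ (by positivity)]
  nlinarith [hturan, hDle', hNp, hp1, hc0, mul_nonneg (by linarith : (0:ℝ) ≤ (p:ℝ) - 1) (by linarith : (0:ℝ) ≤ (N:ℝ)),
    mul_nonneg (by linarith : (0:ℝ) ≤ (p:ℝ) - 1) hc0]
end

section
/- For every integer p ≥ 1 and every integer n of the form n = k·p with k ≥ 4, there exists a traceable simple graph G on n vertices with at most n²/(2p) edges whose maximum induced matching has size exactly p. -/
open SimpleGraph

/-! ### Arithmetic helpers -/

lemma nat_div_eq_iff' {k : ℕ} (hk : 0 < k) (x b : ℕ) :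
    x / k = b ↔ b * k ≤ x ∧ x < b * k + k := by
  constructor
  · rintro rfl
    exact ⟨Nat.div_mul_le_self x k, Nat.lt_div_mul_add hk⟩
  · rintro ⟨h1, h2⟩
    have := Nat.div_mul_le_self x k
    have := Nat.lt_div_mul_add (a := x) hk
    have h3 : b ≤ x / k := by
      by_contra hc
      push_neg at hc
      have : (x/k + 1) * k ≤ b * k := Nat.mul_le_mul_right k hc
      simp [add_mul] at this
      omega
    have h4 : x / k ≤ b := by
      by_contra hc
      push_neg at hc
      have : (b + 1) * k ≤ (x/k) * k := Nat.mul_le_mul_right k hc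
      simp [add_mul] at this
      omega
    omega

lemma block_div {k : ℕ} (hk : 0 < k) (b c : ℕ) (hc : c < k) : (b * k + c) / k = b :=
  (nat_div_eq_iff' hk _ b).2 ⟨by omega, by omega⟩

lemma gap_lemma {k : ℕ} (i j : ℕ) (h : i ≠ j) : i * k + k ≤ j * k ∨ j * k + k ≤ i * k := by
  rcases Nat.lt_or_ge i j with hlt | hge
  · left
    have : (i + 1) * k ≤ j * k := Nat.mul_le_mul_right k hlt
    rw [add_mul, one_mul] at this
    omega
  · right
    have hlt : j < i := by omega
    have : (j + 1) * k ≤ i * k := Nat.mul_le_mul_right k hlt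
    rw [add_mul, one_mul] at this
    omega

lemma blt {k p b c : ℕ} (hb : b < p) (hc : c < k) : b * k + c < k * p := by
  have h := Nat.mul_le_mul_right k hb
  rw [Nat.succ_mul] at h
  have h2 : p * k = k * p := Nat.mul_comm p k
  omega

lemma div_lt_of_lt_mul' {k p x : ℕ} (hk : 0 < k) (hx : x < k * p) : x / k < p := by
  rcases Nat.lt_or_ge (x / k) p with h | h
  · exact h
  · exfalso
    have h1 := (nat_div_eq_iff' hk x (x / k)).1 rfl
    have h2 : p * k ≤ (x / k) * k := Nat.mul_le_mul_right k h
    have h3 : p * k = k * p := Nat.mul_comm p k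
    omega

lemma div_succ_eq {k : ℕ} (hk : 2 ≤ k) {x : ℕ} (h : x % k = 0) : (x + 1) / k = x / k := by
  have hx : (x / k) * k = x := Nat.div_mul_cancel (Nat.dvd_of_mod_eq_zero h)
  calc (x + 1) / k = ((x / k) * k + 1) / k := by rw [hx]
    _ = x / k := block_div (by omega) _ 1 (by omega)

lemma div_pred_eq {k : ℕ} (hk : 2 ≤ k) {x : ℕ} (h : x % k ≠ 0) : (x - 1) / k = x / k := by
  have h1 := Nat.div_add_mod' x k
  have h2 : x % k < k := Nat.mod_lt x (by omega)
  have hx : x - 1 = (x / k) * k + (x % k - 1) := by omega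
  rw [hx, block_div (by omega) _ _ (by omega)]

/-! ### The graph -/

/-- `p` blocks of size `k`: cliques on blocks, plus consecutive-integer edges. -/
def blockGraph (k p : ℕ) : SimpleGraph (Fin (k * p)) where
  Adj u v := u ≠ v ∧ (u.val / k = v.val / k ∨ u.val + 1 = v.val ∨ v.val + 1 = u.val)
  symm := by
    constructor
    rintro u v ⟨h1, h2⟩
    exact ⟨h1.symm, by tauto⟩
  loopless := ⟨fun u h => h.1 rfl⟩

instance (k p : ℕ) : DecidableRel (blockGraph k p).Adj := fun u v =>
  inferInstanceAs (Decidable (_ ∧ _))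

lemma blockGraph_adj {k p : ℕ} {u v : Fin (k*p)} :
    (blockGraph k p).Adj u v ↔
      u ≠ v ∧ (u.val / k = v.val / k ∨ u.val + 1 = v.val ∨ v.val + 1 = u.val) :=
  Iff.rfl

lemma blockGraph_adj_succ (k p i : ℕ) (h : i + 1 < k * p) :
    (blockGraph k p).Adj ⟨i, by omega⟩ ⟨i+1, h⟩ :=
  ⟨by simp [Fin.ext_iff], Or.inr (Or.inl rfl)⟩

/-! ### Traceability -/

/-- ascending hamiltonian walk -/
def upWalk (k p : ℕ) : (m i : ℕ) → (h : i + m + 1 = k * p) →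
    (blockGraph k p).Walk ⟨i, by omega⟩ ⟨k*p - 1, by omega⟩
  | 0, i, h => Walk.nil.copy rfl (Fin.ext (by simp only []; omega))
  | (m+1), i, h =>
      Walk.cons (blockGraph_adj_succ k p i (by omega))
        (upWalk k p m (i+1) (by omega))

lemma upWalk_support (k p : ℕ) : ∀ (m i : ℕ) (h : i + m + 1 = k * p),
    (upWalk k p m i h).support.map Fin.val = List.range' i (m+1) := by
  intro m
  induction m with
  | zero =>
    intro i h
    rw [upWalk, Walk.support_copy, Walk.support_nil, List.range'_one]
    simp
  | succ m ih =>
    intro i h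
    rw [upWalk, Walk.support_cons, List.map_cons, ih (i+1) (by omega)]
    simp [List.range'_succ]

lemma blockGraph_traceable (k p : ℕ) (h : 0 < k * p) :
    ∃ (u v : Fin (k*p)) (w : (blockGraph k p).Walk u v), w.IsHamiltonian := by
  refine ⟨⟨0, h⟩, ⟨k*p-1, by omega⟩, upWalk k p (k*p-1) 0 (by omega), ?_⟩
  intro v
  have hs := upWalk_support k p (k*p-1) 0 (by omega)
  have hnd : ((upWalk k p (k*p-1) 0 (by omega)).support.map Fin.val).Nodup := by
    rw [hs]; exact List.nodup_range'
  have hmem : v.val ∈ (upWalk k p (k*p-1) 0 (by omega)).support.map Fin.val := by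
    rw [hs]
    have : k*p - 1 + 1 = k*p := by omega
    rw [this, ← List.range_eq_range']
    exact List.mem_range.2 v.isLt
  apply List.count_eq_one_of_mem (hnd.of_map _)
  obtain ⟨w, hw, hwv⟩ := List.mem_map.1 hmem
  exact (Fin.ext hwv : w = v) ▸ hw

/-! ### Degree bound -/

lemma card_block {k p : ℕ} (hk : 0 < k) {b : ℕ} (hb : b < p) :
    (Finset.univ.filter (fun v : Fin (k*p) => v.val / k = b)).card = k := by
  have hinj : Function.Injective
      (fun j : Fin k => (⟨b*k + j.val, blt hb j.isLt⟩ : Fin (k*p))) := by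
    intro a c h
    rw [Fin.ext_iff] at h ⊢
    simpa using h
  have himg : (Finset.univ.filter (fun v : Fin (k*p) => v.val / k = b)) =
      Finset.univ.image (fun j : Fin k => (⟨b*k + j.val, blt hb j.isLt⟩ : Fin (k*p))) := by
    ext v
    simp only [Finset.mem_filter, Finset.mem_univ, true_and, Finset.mem_image]
    rw [nat_div_eq_iff' hk]
    constructor
    · rintro ⟨h1, h2⟩
      exact ⟨⟨v.val - b*k, by omega⟩, Fin.ext (by simp; omega)⟩
    · rintro ⟨j, rfl⟩
      refine ⟨?_, ?_⟩ <;> simp <;> omega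
  rw [himg, Finset.card_image_of_injective _ hinj, Finset.card_univ, Fintype.card_fin]

/-- the (at most one) neighbor of `u` outside its own block -/
def crossNbr (k p : ℕ) (hn : 0 < k*p) (u : Fin (k*p)) : Fin (k*p) :=
  ⟨(if u.val % k = 0 then u.val - 1 else u.val + 1) % (k*p), Nat.mod_lt _ hn⟩

lemma blockGraph_degree_le (k p : ℕ) (hk : 4 ≤ k) (hp : 1 ≤ p) (u : Fin (k*p)) :
    (blockGraph k p).degree u ≤ k := by
  have hn : 0 < k * p := Nat.mul_pos (by omega) hp
  have hsub : (blockGraph k p).neighborFinset u ⊆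
      ((Finset.univ.filter (fun v : Fin (k*p) => v.val / k = u.val / k)).erase u)
        ∪ {crossNbr k p hn u} := by
    intro v hv
    rw [SimpleGraph.mem_neighborFinset, blockGraph_adj] at hv
    obtain ⟨hne, hcase⟩ := hv
    by_cases hsame : v.val / k = u.val / k
    · exact Finset.mem_union_left _
        (Finset.mem_erase.2 ⟨fun h => hne h.symm, by simp [hsame]⟩)
    · apply Finset.mem_union_right
      rw [Finset.mem_singleton]
      rcases hcase with h | h | h
      · exact absurd h.symm hsame
      · -- v = u + 1, different block, so u % k ≠ 0
        have hu0 : u.val % k ≠ 0 := by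
          intro h0
          apply hsame
          rw [← h, div_succ_eq (by omega) h0]
        have hv' : v.val = u.val + 1 := h.symm
        apply Fin.ext
        simp only [crossNbr]
        rw [if_neg hu0, Nat.mod_eq_of_lt (by omega : u.val + 1 < k*p)]
        omega
      · -- u = v + 1, different block, so u % k = 0
        have hu0 : u.val % k = 0 := by
          by_contra h0
          apply hsame
          have : v.val = u.val - 1 := by omega
          rw [this, div_pred_eq (by omega) h0]
        apply Fin.ext
        simp only [crossNbr]
        rw [if_pos hu0, Nat.mod_eq_of_lt (by omega : u.val - 1 < k*p)]
        omega
  have humem : u ∈ Finset.univ.filter (fun v : Fin (k*p) => v.val / k = u.val / k) := by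
    simp
  have hdivlt : u.val / k < p := div_lt_of_lt_mul' (by omega) u.isLt
  calc (blockGraph k p).degree u
      = ((blockGraph k p).neighborFinset u).card := rfl
    _ ≤ (((Finset.univ.filter (fun v : Fin (k*p) => v.val / k = u.val / k)).erase u)
          ∪ {crossNbr k p hn u}).card := Finset.card_le_card hsub
    _ ≤ ((Finset.univ.filter (fun v : Fin (k*p) => v.val / k = u.val / k)).erase u).card
          + 1 := by
        apply le_trans (Finset.card_union_le _ _)
        simp
    _ = (Finset.univ.filter (fun v : Fin (k*p) => v.val / k = u.val / k)).card - 1 + 1 := by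
        rw [Finset.card_erase_of_mem humem]
    _ = k - 1 + 1 := by rw [card_block (by omega) hdivlt]
    _ = k := by omega

lemma blockGraph_edge_bound (k p : ℕ) (hk : 4 ≤ k) (hp : 1 ≤ p) :
    2 * (blockGraph k p).edgeFinset.card ≤ k * p * k := by
  rw [← SimpleGraph.sum_degrees_eq_twice_card_edges]
  calc ∑ v : Fin (k*p), (blockGraph k p).degree v
      ≤ ∑ _v : Fin (k*p), k :=
        Finset.sum_le_sum (fun v _ => blockGraph_degree_le k p hk hp v)
    _ = k * p * k := by simp [Finset.sum_const, Finset.card_univ, mul_comm]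

/-! ### The standard induced matching -/

def stdM (k p : ℕ) (hk : 4 ≤ k) : Finset (Sym2 (Fin (k*p))) :=
  Finset.univ.image (fun i : Fin p =>
    s((⟨i.val * k, by have := blt i.isLt (show 0 < k by omega); omega⟩ : Fin (k*p)),
      (⟨i.val * k + 1, blt i.isLt (by omega)⟩ : Fin (k*p))))

lemma stdM_card (k p : ℕ) (hk : 4 ≤ k) : (stdM k p hk).card = p := by
  rw [stdM, Finset.card_image_of_injective, Finset.card_univ, Fintype.card_fin]
  intro i j hij
  rw [Sym2.eq_iff] at hij
  simp only [Fin.mk.injEq] at hij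
  rcases eq_or_ne i.val j.val with h | h
  · exact Fin.ext h
  · exfalso
    rcases gap_lemma (k := k) i.val j.val h with hg | hg <;> omega

lemma stdM_induced (k p : ℕ) (hk : 4 ≤ k) :
    IsInducedMatching (blockGraph k p) (stdM k p hk) := by
  refine ⟨?_, ?_, ?_⟩
  · rintro e he
    obtain ⟨i, -, rfl⟩ := Finset.mem_image.1 he
    rw [SimpleGraph.mem_edgeSet]
    exact ⟨by simp [Fin.ext_iff], Or.inr (Or.inl rfl)⟩
  · rintro e he f hf hef v hve hvf
    obtain ⟨i, -, rfl⟩ := Finset.mem_image.1 he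
    obtain ⟨j, -, rfl⟩ := Finset.mem_image.1 hf
    have hij : i.val ≠ j.val := by
      intro h
      have : i = j := Fin.ext h
      subst this
      exact hef rfl
    rw [Sym2.mem_iff] at hve hvf
    have hgap := gap_lemma (k := k) i.val j.val hij
    rcases hve with rfl | rfl <;> rcases hvf with h | h <;>
      (have hval := congrArg Fin.val h; simp only [] at hval; omega)
  · rintro u v hadj ⟨e, he, hue⟩ ⟨f, hf, hvf⟩
    obtain ⟨i, -, rfl⟩ := Finset.mem_image.1 he
    obtain ⟨j, -, rfl⟩ := Finset.mem_image.1 hf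
    rw [Sym2.mem_iff] at hue hvf
    obtain ⟨hne, hcase⟩ := hadj
    have hnev : u.val ≠ v.val := fun h => hne (Fin.ext h)
    have hu' : u.val = i.val*k ∨ u.val = i.val*k+1 := by
      rcases hue with rfl | rfl
      · exact Or.inl rfl
      · exact Or.inr rfl
    have hv' : v.val = j.val*k ∨ v.val = j.val*k+1 := by
      rcases hvf with rfl | rfl
      · exact Or.inl rfl
      · exact Or.inr rfl
    rcases eq_or_ne i.val j.val with hij | hij
    · -- same block
      obtain rfl : i = j := Fin.ext hij
      have hM : s((⟨i.val * k, by have := blt i.isLt (show 0 < k by omega); omega⟩ : Fin (k*p)),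
          (⟨i.val * k + 1, blt i.isLt (by omega)⟩ : Fin (k*p))) ∈ stdM k p hk :=
        Finset.mem_image.2 ⟨i, Finset.mem_univ i, rfl⟩
      rcases hu' with h1 | h1 <;> rcases hv' with h2 | h2
      · exact absurd (h1.trans h2.symm) hnev
      · have : s(u, v) = s((⟨i.val * k, by have := blt i.isLt (show 0 < k by omega); omega⟩ : Fin (k*p)),
            (⟨i.val * k + 1, blt i.isLt (by omega)⟩ : Fin (k*p))) := by
          rw [Sym2.eq_iff]
          exact Or.inl ⟨Fin.ext h1, Fin.ext h2⟩
        rw [this]; exact hM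
      · have : s(u, v) = s((⟨i.val * k, by have := blt i.isLt (show 0 < k by omega); omega⟩ : Fin (k*p)),
            (⟨i.val * k + 1, blt i.isLt (by omega)⟩ : Fin (k*p))) := by
          rw [Sym2.eq_iff]
          exact Or.inr ⟨Fin.ext h1, Fin.ext h2⟩
        rw [this]; exact hM
      · exact absurd (h1.trans h2.symm) hnev
    · -- different blocks: impossible
      exfalso
      have hgap := gap_lemma (k := k) i.val j.val hij
      rcases hcase with hd | hd | hd
      · have h1 : u.val / k = i.val := by
          rcases hu' with h | h
          · rw [h, Nat.mul_div_cancel _ (show 0 < k by omega)]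
          · rw [h, block_div (show 0 < k by omega) _ 1 (by omega)]
        have h2 : v.val / k = j.val := by
          rcases hv' with h | h
          · rw [h, Nat.mul_div_cancel _ (show 0 < k by omega)]
          · rw [h, block_div (show 0 < k by omega) _ 1 (by omega)]
        rw [h1, h2] at hd
        exact hij hd
      · omega
      · omega

lemma blockGraph_mim_le (k p : ℕ) (hk : 4 ≤ k) (M : Finset (Sym2 (Fin (k*p))))
    (hM : IsInducedMatching (blockGraph k p) M) : M.card ≤ p := by
  classical
  obtain ⟨hedges, hdisj, hind⟩ := hM
  set F : Sym2 (Fin (k*p)) → Fin p :=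
    fun e => ⟨e.out.1.val / k, div_lt_of_lt_mul' (show 0 < k by omega) e.out.1.isLt⟩
    with hFdef
  have key : ∀ e ∈ M, ∀ f ∈ M, ∀ x y : Fin (k*p), x ∈ e → y ∈ f →
      x.val / k = y.val / k → e = f := by
    intro e he f hf x y hx hy hdiv
    rcases eq_or_ne x y with rfl | hxy
    · by_contra hef
      exact (hdisj e he f hf hef x hx) hy
    · have hadj : (blockGraph k p).Adj x y := ⟨hxy, Or.inl hdiv⟩
      have hs := hind x y hadj ⟨e, he, hx⟩ ⟨f, hf, hy⟩
      have he' : e = s(x, y) := by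
        by_contra hne
        exact (hdisj e he _ hs hne x hx) (Sym2.mem_mk_left x y)
      have hf' : f = s(x, y) := by
        by_contra hne
        exact (hdisj f hf _ hs hne y hy) (Sym2.mem_mk_right x y)
      rw [he', hf']
  have hinj : Set.InjOn F M := by
    intro e he f hf hFf
    exact key e he f hf _ _ (Sym2.out_fst_mem e) (Sym2.out_fst_mem f)
      (by simpa [hFdef, Fin.ext_iff] using hFf)
  have := Finset.card_le_card_of_injOn F (fun e _ => Finset.mem_univ (F e)) hinj
  simpa using this

/-- For every `p ≥ 1` and every `n = k·p` with `k ≥ 4`, there is a traceable graph on `n`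
vertices with at most `n² / (2p)` edges whose maximum induced matching has size exactly `p`. -/
theorem stmt_1 (p : ℕ) (hp : 1 ≤ p) (k : ℕ) (hk : 4 ≤ k) :
    ∃ G : SimpleGraph (Fin (k * p)), Traceable G ∧
      (G.edgeSet.ncard : ℝ) ≤ (k * p : ℝ) ^ 2 / (2 * p) ∧
      (∃ M : Finset (Sym2 (Fin (k * p))), IsInducedMatching G M ∧ M.card = p) ∧
      (∀ M : Finset (Sym2 (Fin (k * p))), IsInducedMatching G M → M.card ≤ p) := by
  have hn : 0 < k * p := Nat.mul_pos (by omega) hp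
  refine ⟨blockGraph k p, blockGraph_traceable k p hn, ?_,
    ⟨stdM k p hk, stdM_induced k p hk, stdM_card k p hk⟩, blockGraph_mim_le k p hk⟩
  have hE := blockGraph_edge_bound k p hk hp
  have hcard : (blockGraph k p).edgeSet.ncard = (blockGraph k p).edgeFinset.card := by
    rw [← SimpleGraph.coe_edgeFinset, Set.ncard_coe_finset]
  rw [hcard, le_div_iff₀ (by positivity)]
  have h2 : (2 * (blockGraph k p).edgeFinset.card : ℝ) ≤ (k*p*k : ℝ) := by
    exact_mod_cast hE
  have hppos : (0:ℝ) ≤ (p : ℝ) := by positivity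
  nlinarith [mul_le_mul_of_nonneg_right h2 hppos]
end

section
/- Let G be a traceable simple graph on n ≥ 2 vertices. Then G contains at least n²/(4·nd(G)) edges, where nd(G) is the neighborhood diversity of G. -/
/-- A partition of the vertex set witnesses neighborhood diversity if any two vertices `u, v`
in a common class satisfy `N(u) \ {v} = N(v) \ {u}`. -/
def IsNDPartition {V : Type*} [Fintype V] [DecidableEq V] (G : SimpleGraph V)
    (P : Finpartition (Finset.univ : Finset V)) : Prop :=
  ∀ C ∈ P.parts, ∀ u ∈ C, ∀ v ∈ C, ∀ w : V, w ≠ u → w ≠ v → (G.Adj u w ↔ G.Adj v w)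

/-- The neighborhood diversity of `G`: the smallest number of classes of a partition of the
vertex set in which any two vertices `u, v` of a common class satisfy `N(u) \ {v} = N(v) \ {u}`. -/
noncomputable def neighborhoodDiversity {V : Type*} [Fintype V] [DecidableEq V]
    (G : SimpleGraph V) : ℕ :=
  sInf {d | ∃ P : Finpartition (Finset.univ : Finset V), IsNDPartition G P ∧ P.parts.card = d}

open Finset List in

/-- successor injection lemma -/
lemma succ_card_le {V : Type*} [Fintype V] [DecidableEq V] {G : SimpleGraph V}
    [DecidableRel G.Adj]
    {a b : V} (p : G.Walk a b) (hp : p.IsHamiltonian) (C : Finset V) (v : V)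
    (hnbhd : ∀ c ∈ C, ∀ w, G.Adj c w ↔ G.Adj v w) :
    C.card - 1 ≤ G.degree v := by
  classical
  set L := p.support with hL
  have hnd : L.Nodup := hp.isPath.support_nodup
  have hmem : ∀ x : V, x ∈ L := fun x => hp.mem_support x
  have hLne : L ≠ [] := p.support_ne_nil
  have hchain : List.Chain' G.Adj L := p.isChain_adj_support
  have key : (C.erase b).card ≤ (G.neighborFinset v).card := by
    apply Finset.card_le_card_of_injOn
      (fun c => if h : List.idxOf c L + 1 < L.length then L[List.idxOf c L + 1] else c)
    · intro c hc
      obtain ⟨hcb, hcC⟩ := Finset.mem_erase.1 hc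
      have hi : List.idxOf c L < L.length := List.idxOf_lt_length_iff.2 (hmem c)
      have hi1 : List.idxOf c L + 1 < L.length := by
        rcases Nat.lt_or_ge (List.idxOf c L + 1) L.length with h | h
        · exact h
        · exfalso
          have heq : List.idxOf c L = L.length - 1 := by omega
          have : L[List.idxOf c L]'hi = L.getLast hLne := by
            rw [List.getLast_eq_getElem]
            congr 1
          rw [List.getElem_idxOf hi] at this
          rw [p.getLast_support] at this
          exact hcb this
      simp only [dif_pos hi1]
      have hadj : G.Adj (L.get ⟨List.idxOf c L, hi⟩) (L.get ⟨List.idxOf c L + 1, hi1⟩) :=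
        List.isChain_iff_getElem.1 hchain (List.idxOf c L) (by omega)
      simp only [List.get_eq_getElem, List.getElem_idxOf hi] at hadj
      rw [Finset.mem_coe, SimpleGraph.mem_neighborFinset]
      exact ((hnbhd c hcC _).1 hadj).symm.symm
    · intro c hc c' hc' hfe
      obtain ⟨hcb, hcC⟩ := Finset.mem_erase.1 hc
      obtain ⟨hcb', hcC'⟩ := Finset.mem_erase.1 hc'
      have hi : List.idxOf c L < L.length := List.idxOf_lt_length_iff.2 (hmem c)
      have hi' : List.idxOf c' L < L.length := List.idxOf_lt_length_iff.2 (hmem c')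
      have hi1 : List.idxOf c L + 1 < L.length := by
        rcases Nat.lt_or_ge (List.idxOf c L + 1) L.length with h | h
        · exact h
        · exfalso
          have : L[List.idxOf c L]'hi = L.getLast hLne := by
            rw [List.getLast_eq_getElem]; congr 1; omega
          rw [List.getElem_idxOf hi, p.getLast_support] at this
          exact hcb this
      have hi1' : List.idxOf c' L + 1 < L.length := by
        rcases Nat.lt_or_ge (List.idxOf c' L + 1) L.length with h | h
        · exact h
        · exfalso
          have : L[List.idxOf c' L]'hi' = L.getLast hLne := by
            rw [List.getLast_eq_getElem]; congr 1; omega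
          rw [List.getElem_idxOf hi', p.getLast_support] at this
          exact hcb' this
      simp only [dif_pos hi1, dif_pos hi1'] at hfe
      have : List.idxOf c L + 1 = List.idxOf c' L + 1 :=
        hnd.getElem_inj_iff.1 hfe
      have hidx : List.idxOf c L = List.idxOf c' L := by omega
      calc c = L[List.idxOf c L]'hi := (List.getElem_idxOf hi).symm
        _ = L[List.idxOf c' L]'hi' := by congr 1
        _ = c' := List.getElem_idxOf hi'
  calc C.card - 1 ≤ (C.erase b).card := Finset.pred_card_le_card_erase
    _ ≤ (G.neighborFinset v).card := key
    _ = G.degree v := G.card_neighborFinset_eq_degree v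

open Finset List in
lemma deg_bound {V : Type*} [Fintype V] [DecidableEq V] {G : SimpleGraph V}
    [DecidableRel G.Adj] {P : Finpartition (Finset.univ : Finset V)}
    (hP : IsNDPartition G P) {a b : V} (p : G.Walk a b) (hp : p.IsHamiltonian)
    {C : Finset V} (hC : C ∈ P.parts) {v : V} (hv : v ∈ C) :
    C.card - 1 ≤ G.degree v := by
  by_cases hall : ∀ u ∈ C, u ≠ v → G.Adj v u
  · have hsub : C.erase v ⊆ G.neighborFinset v := by
      intro u hu
      obtain ⟨huv, huC⟩ := Finset.mem_erase.1 hu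
      rw [SimpleGraph.mem_neighborFinset]
      exact hall u huC huv
    calc C.card - 1 = (C.erase v).card := (Finset.card_erase_of_mem hv).symm
      _ ≤ (G.neighborFinset v).card := Finset.card_le_card hsub
      _ = G.degree v := G.card_neighborFinset_eq_degree v
  · push_neg at hall
    obtain ⟨u, hu, hune, hnadj⟩ := hall
    have hP' := hP C hC
    -- step A
    have stepA : ∀ x ∈ C, ¬ G.Adj x u ∧ ¬ G.Adj x v := by
      intro x hx
      by_cases hxu : x = u
      · subst hxu
        exact ⟨G.loopless.irrefl x, fun h => hnadj h.symm⟩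
      by_cases hxv : x = v
      · subst hxv
        exact ⟨fun h => hnadj h, G.loopless.irrefl x⟩
      constructor
      · intro h
        exact hnadj ((hP' x hx v hv u (Ne.symm hxu) hune).1 h)
      · intro h
        exact hnadj (((hP' x hx u hu v (Ne.symm hxv) (fun he => hune he.symm)).1 h).symm)
    -- independence
    have hind : ∀ x ∈ C, ∀ y ∈ C, ¬ G.Adj x y := by
      intro x hx y hy hadj
      by_cases hyu : y = u
      · exact (stepA x hx).1 (hyu ▸ hadj)
      by_cases hyv : y = v
      · exact (stepA x hx).2 (hyv ▸ hadj)
      have hyx : y ≠ x := fun he => G.loopless.irrefl x (he ▸ hadj)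
      have := (hP' x hx u hu y hyx hyu).1 hadj
      exact (stepA y hy).1 this.symm
    -- equal neighborhoods
    have hnbhd : ∀ c ∈ C, ∀ w, G.Adj c w ↔ G.Adj v w := by
      intro c hc w
      by_cases hwc : w = c
      · subst hwc
        simp only [G.loopless.irrefl w, false_iff]
        intro h
        exact hind v hv w hc h
      by_cases hwv : w = v
      · subst hwv
        simp only [G.loopless.irrefl w, iff_false]
        intro h
        exact hind c hc w hv h
      exact hP' c hc v hv w hwc hwv
    exact succ_card_le p hp C v hnbhd

/-- A traceable graph on `n ≥ 2` vertices contains at least `n² / (4·nd(G))` edges. -/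
theorem stmt_2 {V : Type*} [Fintype V] [DecidableEq V] (G : SimpleGraph V)
    (hG : Traceable G) (hn : 2 ≤ Fintype.card V) :
    (Fintype.card V : ℝ) ^ 2 / (4 * neighborhoodDiversity G) ≤ (G.edgeSet.ncard : ℝ) := by
  classical
  obtain ⟨a, b, p, hp⟩ := hG
  set n := Fintype.card V with hn'
  -- the defining set is nonempty: the discrete partition works
  have hbot : IsNDPartition G (⊥ : Finpartition (Finset.univ : Finset V)) := by
    intro C hC u hu v hv w hwu hwv
    rw [Finpartition.parts_bot] at hC
    obtain ⟨x, -, rfl⟩ := Finset.mem_map.1 hC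
    simp only [Function.Embedding.coeFn_mk, Finset.mem_singleton] at hu hv
    subst hu; subst hv
    rfl
  have hset : {d | ∃ P : Finpartition (Finset.univ : Finset V),
      IsNDPartition G P ∧ P.parts.card = d}.Nonempty :=
    ⟨_, ⊥, hbot, rfl⟩
  obtain ⟨P, hP, hcard⟩ := Nat.sInf_mem hset
  set d := neighborhoodDiversity G with hd'
  -- d ≥ 1
  have hcard' : P.parts.card = d := hcard
  have hd1 : 1 ≤ d := by
    rcases Nat.eq_zero_or_pos d with h0 | h1
    · exfalso
      rw [h0, Finset.card_eq_zero] at hcard'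
      have := P.sum_card_parts
      rw [hcard'] at this
      simp only [Finset.sum_empty] at this
      rw [Finset.card_univ] at this
      omega
    · exact h1
  -- edge count abbreviation
  have hedge : G.edgeSet.ncard = G.edgeFinset.card := by
    rw [← SimpleGraph.coe_edgeFinset, Set.ncard_coe_finset]
  set m := G.edgeFinset.card with hm'
  -- m ≥ n - 1
  have hm1 : n - 1 ≤ m := by
    have hnodup : p.edges.Nodup := hp.isPath.edges_nodup
    have hlen : p.edges.length = n - 1 := by
      rw [SimpleGraph.Walk.length_edges, hp.length_eq]
    have hsub : p.edges.toFinset ⊆ G.edgeFinset := by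
      intro e he
      rw [List.mem_toFinset] at he
      rw [SimpleGraph.mem_edgeFinset]
      exact p.edges_subset_edgeSet he
    calc n - 1 = p.edges.toFinset.card := by
          rw [List.toFinset_card_of_nodup hnodup, hlen]
      _ ≤ m := Finset.card_le_card hsub
  -- degree sum bound
  have hsum : ∑ C ∈ P.parts, C.card * (C.card - 1) ≤ 2 * m := by
    rw [hm', ← SimpleGraph.sum_degrees_eq_twice_card_edges]
    have hsplitsum := Finset.sum_biUnion (s := P.parts) (t := fun C : Finset V => C) (f := fun v => G.degree v)
      P.supIndep.pairwiseDisjoint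
    simp only [show (P.parts.biUnion fun C => C) = Finset.univ from P.biUnion_parts] at hsplitsum
    rw [hsplitsum]
    apply Finset.sum_le_sum
    intro C hC
    calc C.card * (C.card - 1) = ∑ _v ∈ C, (C.card - 1) := by
          rw [Finset.sum_const, smul_eq_mul, mul_comm]
      _ ≤ ∑ v ∈ C, G.degree v := Finset.sum_le_sum fun v hv => deg_bound hP p hp hC hv
  -- cast everything to ℝ
  have hsumR : ∑ C ∈ P.parts, ((C.card : ℝ) ^ 2 - C.card) ≤ 2 * (m : ℝ) := by
    calc ∑ C ∈ P.parts, ((C.card : ℝ) ^ 2 - C.card)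
        = ∑ C ∈ P.parts, ((C.card * (C.card - 1) : ℕ) : ℝ) := by
          apply Finset.sum_congr rfl
          intro C hC
          have h1 : 1 ≤ C.card := Finset.card_pos.2 (P.nonempty_of_mem_parts hC)
          rw [Nat.cast_mul, Nat.cast_sub h1]
          push_cast
          ring
      _ = ((∑ C ∈ P.parts, C.card * (C.card - 1) : ℕ) : ℝ) := by rw [Nat.cast_sum]
      _ ≤ ((2 * m : ℕ) : ℝ) := by exact_mod_cast hsum
      _ = 2 * (m : ℝ) := by push_cast; ring
  have hS : ∑ C ∈ P.parts, ((C.card : ℝ)) = (n : ℝ) := by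
    rw [← Nat.cast_sum, P.sum_card_parts, Finset.card_univ]
  have hcheb : (n : ℝ) ^ 2 ≤ (d : ℝ) * ∑ C ∈ P.parts, (C.card : ℝ) ^ 2 := by
    have := sq_sum_le_card_mul_sum_sq (s := P.parts) (f := fun C => (C.card : ℝ))
    rw [hS, hcard'] at this
    exact this
  have hsplit : ∑ C ∈ P.parts, ((C.card : ℝ) ^ 2 - C.card)
      = (∑ C ∈ P.parts, (C.card : ℝ) ^ 2) - n := by
    rw [Finset.sum_sub_distrib, hS]
  rw [hedge]
  have hdR : (1 : ℝ) ≤ (d : ℝ) := by exact_mod_cast hd1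
  have hnR : (2 : ℝ) ≤ (n : ℝ) := by exact_mod_cast hn
  have hmR : (n : ℝ) - 1 ≤ (m : ℝ) := by
    have : ((n - 1 : ℕ) : ℝ) ≤ (m : ℝ) := by exact_mod_cast hm1
    rwa [Nat.cast_sub (by omega), Nat.cast_one] at this
  rw [div_le_iff₀ (by positivity)]
  nlinarith [hsplit ▸ hsumR, hcheb, mul_le_mul_of_nonneg_left
    (hsplit ▸ hsumR) (le_trans zero_le_one hdR),
    mul_nonneg (le_trans zero_le_one hdR) (by nlinarith : (0:ℝ) ≤ 2 * m - n)]
end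

section
/- For every integer d ≥ 1 and every integer n of the form n = k·d with k ≥ 2, there exists a traceable simple graph on n vertices with neighborhood diversity at most 2d and at most 2n²/d edges. -/
/-! ### Auxiliary constructions -/

open Finset

/-- The "path of cliques" graph: vertices are grouped in blocks of `k` consecutive values,
and two distinct vertices are adjacent iff their blocks are equal or consecutive. -/
def blkGraph (n k : ℕ) : SimpleGraph (Fin n) where
  Adj u v := u ≠ v ∧ (u.1/k = v.1/k ∨ u.1/k + 1 = v.1/k ∨ v.1/k + 1 = u.1/k)
  symm := ⟨by intro u v ⟨h1, h2⟩; exact ⟨h1.symm, by tauto⟩⟩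
  loopless := ⟨by intro u ⟨h1, _⟩; exact h1 rfl⟩

/-- The setoid identifying vertices in the same block. -/
def blkSetoid (n k : ℕ) : Setoid (Fin n) :=
  ⟨fun a b => a.1 / k = b.1 / k, ⟨fun _ => rfl, Eq.symm, Eq.trans⟩⟩

instance (n k : ℕ) : DecidableRel (blkSetoid n k).r := fun _ _ => Nat.decEq _ _

/-- An encoding of unordered pairs by (minimum, difference). -/
noncomputable def edgeEnc (n : ℕ) : Sym2 (Fin n) → ℕ × ℕ :=
  Sym2.lift ⟨fun a b => (min a.1 b.1, max a.1 b.1 - min a.1 b.1),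
    fun a b => by simp [Nat.min_comm, Nat.max_comm]⟩

lemma walk_aux {n : ℕ} (G : SimpleGraph (Fin n))
    (hadj : ∀ (i : ℕ) (h : i + 1 < n), G.Adj ⟨i, by omega⟩ ⟨i + 1, h⟩) :
    ∀ (c m : ℕ) (hm : m < n), c = n - 1 - m →
      ∃ p : G.Walk ⟨m, hm⟩ ⟨n - 1, by omega⟩,
        p.support.map Fin.val = List.range' m (n - m) := by
  intro c
  induction c with
  | zero =>
    intro m hm hc
    have hm' : m = n - 1 := by omega
    subst hm'
    refine ⟨SimpleGraph.Walk.nil, ?_⟩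
    have : n - (n - 1) = 1 := by omega
    simp [this]
  | succ c ih =>
    intro m hm hc
    have h1 : m + 1 < n := by omega
    obtain ⟨p, hp⟩ := ih (m + 1) h1 (by omega)
    refine ⟨SimpleGraph.Walk.cons (hadj m h1) p, ?_⟩
    have h2 : n - m = (n - (m + 1)) + 1 := by omega
    rw [SimpleGraph.Walk.support_cons, List.map_cons, hp, h2, List.range'_succ]

lemma traceable_of_consec {n : ℕ} (hn : 0 < n) (G : SimpleGraph (Fin n))
    (hadj : ∀ (i : ℕ) (h : i + 1 < n), G.Adj ⟨i, by omega⟩ ⟨i + 1, h⟩) :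
    Traceable G := by
  obtain ⟨p, hp⟩ := walk_aux G hadj (n - 1 - 0) 0 hn rfl
  refine ⟨_, _, p, ?_⟩
  have hnodup : p.support.Nodup := by
    have : (p.support.map Fin.val).Nodup := by rw [hp]; exact List.nodup_range'
    exact this.of_map _
  have hmem : ∀ v : Fin n, v ∈ p.support := by
    intro v
    have : (v : ℕ) ∈ p.support.map Fin.val := by
      rw [hp]
      simp only [List.mem_range']
      exact ⟨v.1, v.2.trans_eq (by omega), by omega⟩
    obtain ⟨u, hu, hu2⟩ := List.mem_map.1 this
    rwa [show u = v from Fin.ext hu2] at hu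
  exact (SimpleGraph.Walk.IsPath.mk' hnodup).isHamiltonian_of_mem hmem

lemma parts_card (k d : ℕ) (hk : 0 < k) (hd : 0 < d) :
    (Finpartition.ofSetoid (blkSetoid (k*d) k)).parts.card = d := by
  have hn : 0 < k * d := Nat.mul_pos hk hd
  have key : (Finpartition.ofSetoid (blkSetoid (k*d) k)).parts
      = (range d).image (fun j => univ.filter (fun b : Fin (k*d) => b.1 / k = j)) := by
    ext C
    simp only [Finpartition.ofSetoid, Finpartition.ofSetSetoid, mem_image, mem_univ, true_and, mem_range]
    constructor
    · rintro ⟨a, ha⟩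
      refine ⟨a.1 / k, ?_, ?_⟩
      · exact (Nat.div_lt_iff_lt_mul hk).2 (Nat.mul_comm k d ▸ a.2)
      · rw [← ha]; ext b
        simp only [mem_filter, mem_univ, true_and, blkSetoid]
        exact eq_comm
    · rintro ⟨j, hj, hC⟩
      have hjk : j * k < k * d := by
        calc j * k < d * k := (Nat.mul_lt_mul_right hk).2 hj
        _ = k * d := Nat.mul_comm _ _
      refine ⟨⟨j * k, hjk⟩, ?_⟩
      rw [← hC]; ext b
      simp only [mem_filter, mem_univ, true_and, blkSetoid]
      show (j * k) / k = b.1 / k ↔ _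
      rw [show (j * k) / k = j from Nat.mul_div_cancel j hk]
      exact eq_comm
  rw [key, card_image_of_injOn, card_range]
  intro j1 h1 j2 h2 heq
  simp only [coe_range, Set.mem_Iio] at h1 h2
  have hjk : j1 * k < k * d := by
    calc j1 * k < d * k := (Nat.mul_lt_mul_right hk).2 h1
    _ = k * d := Nat.mul_comm _ _
  have hmem : (⟨j1 * k, hjk⟩ : Fin (k*d)) ∈ univ.filter (fun b : Fin (k*d) => b.1 / k = j1) := by
    simp [Nat.mul_div_cancel j1 hk]
  have heq' : univ.filter (fun b : Fin (k*d) => b.1 / k = j1)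
      = univ.filter (fun b : Fin (k*d) => b.1 / k = j2) := heq
  rw [heq'] at hmem
  simpa [Nat.mul_div_cancel j1 hk] using hmem

lemma edge_count (n k : ℕ) (hk : 0 < k) :
    ((blkGraph n k).edgeSet.ncard : ℕ) ≤ n * (2 * k) := by
  have hinj : Set.InjOn (edgeEnc n) (blkGraph n k).edgeSet := by
    intro e1 he1 e2 he2 h
    induction e1 using Sym2.ind with | _ a b =>
    induction e2 using Sym2.ind with | _ c e =>
    simp only [edgeEnc, Sym2.lift_mk, Prod.mk.injEq] at h
    have hcase : ((a : ℕ) = c ∧ (b : ℕ) = e) ∨ ((a : ℕ) = e ∧ (b : ℕ) = c) := by omega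
    rcases hcase with ⟨h1, h2⟩ | ⟨h1, h2⟩
    · rw [Sym2.eq_iff]; left; exact ⟨Fin.ext h1, Fin.ext h2⟩
    · rw [Sym2.eq_iff]; right; exact ⟨Fin.ext h1, Fin.ext h2⟩
  have hsub : (edgeEnc n) '' (blkGraph n k).edgeSet ⊆ ↑(range n ×ˢ range (2 * k)) := by
    rintro p ⟨e, he, rfl⟩
    induction e using Sym2.ind with | _ a b =>
    rw [SimpleGraph.mem_edgeSet] at he
    obtain ⟨hne, hblk⟩ := he
    simp only [edgeEnc, Sym2.lift_mk, coe_product, Set.mem_prod, coe_range, Set.mem_Iio]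
    constructor
    · have := a.2; have := b.2; omega
    · have ha := Nat.div_add_mod (a : ℕ) k
      have hb := Nat.div_add_mod (b : ℕ) k
      have ra := Nat.mod_lt (a : ℕ) hk
      have rb := Nat.mod_lt (b : ℕ) hk
      rcases hblk with h|h|h
      · rw [← h] at hb; omega
      · rw [← h, Nat.mul_succ] at hb; omega
      · rw [← h, Nat.mul_succ] at ha; omega
  calc (blkGraph n k).edgeSet.ncard = ((edgeEnc n) '' (blkGraph n k).edgeSet).ncard :=
        (Set.ncard_image_of_injOn hinj).symm
    _ ≤ (↑(range n ×ˢ range (2 * k)) : Set (ℕ × ℕ)).ncard :=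
        Set.ncard_le_ncard hsub (Set.toFinite _)
    _ = n * (2 * k) := by rw [Set.ncard_coe_finset, card_product, card_range, card_range]

/-- For every `d ≥ 1` and every `n = k·d` with `k ≥ 2`, there is a traceable graph on `n`
vertices with neighborhood diversity at most `2d` and at most `2n²/d` edges. -/
theorem stmt_3 (d : ℕ) (hd : 1 ≤ d) (k : ℕ) (hk : 2 ≤ k) :
    ∃ G : SimpleGraph (Fin (k * d)), Traceable G ∧
      neighborhoodDiversity G ≤ 2 * d ∧
      (G.edgeSet.ncard : ℝ) ≤ 2 * (k * d : ℝ) ^ 2 / d := by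
  have hk0 : 0 < k := by omega
  have hd0 : 0 < d := hd
  have hn : 0 < k * d := Nat.mul_pos hk0 hd0
  refine ⟨blkGraph (k * d) k, ?_, ?_, ?_⟩
  · -- traceable
    apply traceable_of_consec hn
    intro i h
    refine ⟨by simp [Fin.ext_iff], ?_⟩
    have h1 : i / k ≤ (i + 1) / k := Nat.div_le_div_right (by omega)
    have h2 : (i + 1) / k ≤ (i + k) / k := Nat.div_le_div_right (by omega)
    rw [Nat.add_div_right i hk0] at h2
    simp only
    omega
  · -- neighborhood diversity
    have hnd : IsNDPartition (blkGraph (k * d) k)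
        (Finpartition.ofSetoid (blkSetoid (k * d) k)) := by
      intro C hC u hu v hv w hw1 hw2
      simp only [Finpartition.ofSetoid, Finpartition.ofSetSetoid, mem_image, mem_univ, true_and] at hC
      obtain ⟨a, rfl⟩ := hC
      simp only [mem_filter, mem_univ, true_and, blkSetoid] at hu hv
      have huv : u.1 / k = v.1 / k := hu ▸ hv
      constructor
      · rintro ⟨-, hb⟩
        exact ⟨hw2.symm, by rw [← huv]; exact hb⟩
      · rintro ⟨-, hb⟩
        exact ⟨hw1.symm, by rw [huv]; exact hb⟩
    have hmem : d ∈ {m | ∃ P : Finpartition (Finset.univ : Finset (Fin (k * d))),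
        IsNDPartition (blkGraph (k * d) k) P ∧ P.parts.card = m} :=
      ⟨Finpartition.ofSetoid (blkSetoid (k * d) k), hnd, parts_card k d hk0 hd0⟩
    calc neighborhoodDiversity (blkGraph (k * d) k) ≤ d := Nat.sInf_le hmem
      _ ≤ 2 * d := by omega
  · -- edge count
    have hle := edge_count (k * d) k hk0
    have hcast : ((blkGraph (k * d) k).edgeSet.ncard : ℝ) ≤ ((k * d * (2 * k) : ℕ) : ℝ) := by
      exact_mod_cast hle
    refine hcast.trans (le_of_eq ?_)
    have hdne : (d : ℝ) ≠ 0 := by positivity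
    rw [eq_div_iff hdne]
    push_cast
    ring
end

section
/- For every integer k ≥ 1 there exists a traceable cograph on n = 2^k − 1 vertices with at most 2^k · k ≤ n·log₂(n) edges (where for k = 1 the single-vertex graph with 0 edges is meant). -/
/-- A graph is a cograph iff it contains no induced path on four vertices. -/
def IsCograph {V : Type*} (G : SimpleGraph V) : Prop :=
  ¬ ∃ a b c d : V, [a, b, c, d].Nodup ∧
      G.Adj a b ∧ G.Adj b c ∧ G.Adj c d ∧ ¬ G.Adj a c ∧ ¬ G.Adj a d ∧ ¬ G.Adj b d



namespace Stmt5Aux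

/-- `R a b` : `a` is an ancestor of `b` in heap numbering (weak). -/
def R (a b : ℕ) : Prop := ∃ t : ℕ, b / 2 ^ t = a

lemma R_le {a b : ℕ} (h : R a b) : a ≤ b := by
  obtain ⟨t, rfl⟩ := h; exact Nat.div_le_self _ _

lemma R_refl (a : ℕ) : R a a := ⟨0, by simp⟩

lemma R_trans {a b c : ℕ} (h1 : R a b) (h2 : R b c) : R a c := by
  obtain ⟨s, rfl⟩ := h1; obtain ⟨t, rfl⟩ := h2
  exact ⟨t + s, by rw [pow_add, ← Nat.div_div_eq_div_mul]⟩

lemma R_antisymm {a b : ℕ} (h1 : R a b) (h2 : R b a) : a = b :=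
  le_antisymm (R_le h1) (R_le h2)

lemma R_total {a b x : ℕ} (h1 : R a x) (h2 : R b x) : R a b ∨ R b a := by
  obtain ⟨s, rfl⟩ := h1; obtain ⟨t, rfl⟩ := h2
  rcases le_total s t with h | h
  · refine Or.inr ⟨t - s, ?_⟩
    rw [Nat.div_div_eq_div_mul, ← pow_add, Nat.add_sub_cancel' h]
  · refine Or.inl ⟨s - t, ?_⟩
    rw [Nat.div_div_eq_div_mul, ← pow_add, Nat.add_sub_cancel' h]

lemma not_R_children1 {r : ℕ} (hr : 1 ≤ r) : ¬ R (2 * r) (2 * r + 1) := by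
  rintro ⟨t, ht⟩
  rcases t with _ | s
  · simp at ht
  · have h2 : (2:ℕ) ≤ 2 ^ (s + 1) := Nat.one_lt_two_pow (by omega)
    have hle : (2 * r + 1) / 2 ^ (s + 1) ≤ (2 * r + 1) / 2 :=
      Nat.div_le_div_left h2 (by omega)
    omega

lemma not_R_children2 {r : ℕ} (hr : 1 ≤ r) : ¬ R (2 * r + 1) (2 * r) := by
  rintro ⟨t, ht⟩
  rcases t with _ | s
  · simp at ht
  · have h2 : (2:ℕ) ≤ 2 ^ (s + 1) := Nat.one_lt_two_pow (by omega)
    have hle : (2 * r) / 2 ^ (s + 1) ≤ (2 * r) / 2 :=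
      Nat.div_le_div_left h2 (by omega)
    omega

/-- adjacency on heap labels -/
def A (a b : ℕ) : Prop := a ≠ b ∧ (R a b ∨ R b a)

/-- inorder traversal of the complete binary heap of height `h` rooted at `r`. -/
def ino : ℕ → ℕ → List ℕ
  | 0, _ => []
  | h + 1, r => ino h (2 * r) ++ r :: ino h (2 * r + 1)

lemma mem_ino : ∀ (h r x : ℕ), x ∈ ino h r ↔ ∃ t, t < h ∧ x / 2 ^ t = r := by
  intro h
  induction h with
  | zero => simp [ino]
  | succ h ih =>
    intro r x
    simp only [ino, List.mem_append, List.mem_cons, ih]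
    constructor
    · rintro ((⟨t, ht, hx⟩) | rfl | ⟨t, ht, hx⟩)
      · refine ⟨t + 1, by omega, ?_⟩
        rw [pow_succ, ← Nat.div_div_eq_div_mul, hx]; omega
      · exact ⟨0, by omega, by simp⟩
      · refine ⟨t + 1, by omega, ?_⟩
        rw [pow_succ, ← Nat.div_div_eq_div_mul, hx]; omega
    · rintro ⟨t, ht, hx⟩
      rcases t with _ | s
      · right; left; simp at hx; omega
      · rw [pow_succ, ← Nat.div_div_eq_div_mul] at hx
        have : x / 2 ^ s = 2 * r ∨ x / 2 ^ s = 2 * r + 1 := by omega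
        rcases this with h' | h'
        · exact Or.inl ⟨s, by omega, h'⟩
        · exact Or.inr (Or.inr ⟨s, by omega, h'⟩)

lemma R_of_mem_ino {h r x : ℕ} (hx : x ∈ ino h r) : R r x := by
  rw [mem_ino] at hx; obtain ⟨t, _, ht⟩ := hx; exact ⟨t, ht⟩

lemma length_ino : ∀ h r, (ino h r).length = 2 ^ h - 1 := by
  intro h
  induction h with
  | zero => simp [ino]
  | succ h ih =>
    intro r
    have h1 : 1 ≤ 2 ^ h := Nat.one_le_two_pow
    simp only [ino, List.length_append, List.length_cons, ih]
    rw [pow_succ]; omega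

lemma nodup_ino : ∀ h r, 1 ≤ r → (ino h r).Nodup := by
  intro h
  induction h with
  | zero => simp [ino]
  | succ h ih =>
    intro r hr
    have hl := ih (2 * r) (by omega)
    have hrr := ih (2 * r + 1) (by omega)
    rw [ino, List.nodup_append]
    refine ⟨hl, ?_, ?_⟩
    · rw [List.nodup_cons]
      refine ⟨fun hm => ?_, hrr⟩
      have := R_le (R_of_mem_ino hm); omega
    · intro x hx y hx' hxy
      subst hxy
      have h1 := R_of_mem_ino hx
      rw [List.mem_cons] at hx'
      rcases hx' with rfl | hx'
      · have := R_le h1; omega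
      · have h2 := R_of_mem_ino hx'
        rcases R_total h1 h2 with h' | h'
        · exact not_R_children1 hr h'
        · exact not_R_children2 hr h'

lemma R_parent1 (r : ℕ) : R r (2 * r) := ⟨1, by omega⟩
lemma R_parent2 (r : ℕ) : R r (2 * r + 1) := ⟨1, by omega⟩

lemma chain_ino : ∀ h r, 1 ≤ r → (ino h r).Chain' A := by
  intro h
  induction h with
  | zero => simp [ino, List.Chain']
  | succ h ih =>
    intro r hr
    rw [ino]
    apply List.IsChain.append (ih (2 * r) (by omega))
    · rw [List.isChain_cons]
      refine ⟨fun y hy => ?_, ih (2 * r + 1) (by omega)⟩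
      have hy' := R_of_mem_ino (List.mem_of_mem_head? hy)
      have hley := R_le hy'
      exact ⟨by omega, Or.inl (R_trans (R_parent2 r) hy')⟩
    · intro x hx y hy
      have hx' := R_of_mem_ino (List.mem_of_mem_getLast? hx)
      have hlex := R_le hx'
      simp only [List.head?_cons, Option.mem_some_iff] at hy
      subst hy
      exact ⟨by omega, Or.inr (R_trans (R_parent1 r) hx')⟩

lemma bounds_of_mem_ino {k x : ℕ} (hx : x ∈ ino k 1) : 1 ≤ x ∧ x ≤ 2 ^ k - 1 := by
  rw [mem_ino] at hx
  obtain ⟨t, htk, ht⟩ := hx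
  have h1 : 1 ≤ x := le_trans (by omega) (ht ▸ Nat.div_le_self x (2 ^ t))
  have hp : 0 < 2 ^ t := Nat.two_pow_pos t
  constructor
  · exact h1
  · have hlt : x < 2 * 2 ^ t := by
      rw [← Nat.div_lt_iff_lt_mul hp]; omega
    have : 2 * 2 ^ t ≤ 2 ^ k := by
      calc 2 * 2 ^ t = 2 ^ (t + 1) := by ring
        _ ≤ 2 ^ k := Nat.pow_le_pow_right (by omega) (by omega)
    omega

end Stmt5Aux
namespace Stmt5Aux

/-- The ancestor graph of the complete binary heap, on `Fin n` via labels `v+1`. -/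
def Gr (n : ℕ) : SimpleGraph (Fin n) where
  Adj a b := A ((a : ℕ) + 1) ((b : ℕ) + 1)
  symm := ⟨by rintro a b ⟨h1, h2⟩; exact ⟨fun h => h1 h.symm, h2.symm⟩⟩
  loopless := ⟨by rintro a ⟨h1, _⟩; exact h1 rfl⟩

lemma adj_Gr {n : ℕ} {a b : Fin n} : (Gr n).Adj a b ↔ A ((a : ℕ) + 1) ((b : ℕ) + 1) :=
  Iff.rfl

/-- If `x,y` comparable, `y,z` comparable, but `x,z` not, then `y` is below both. -/
lemma mid {x y z : ℕ} (hxy : R x y ∨ R y x) (hyz : R y z ∨ R z y)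
    (hxz : ¬ (R x z ∨ R z x)) : R y x ∧ R y z := by
  rcases hxy with h1 | h1
  · rcases hyz with h2 | h2
    · exact absurd (Or.inl (R_trans h1 h2)) hxz
    · exact absurd (R_total h1 h2) hxz
  · rcases hyz with h2 | h2
    · exact ⟨h1, h2⟩
    · exact absurd (Or.inr (R_trans h2 h1)) hxz

lemma cograph_Gr (n : ℕ) : IsCograph (Gr n) := by
  rintro ⟨a, b, c, d, hnd, hab, hbc, hcd, hac, had, hbd⟩
  simp only [List.nodup_cons, List.mem_cons, List.not_mem_nil, or_false,
    List.mem_singleton, not_or, List.nodup_nil, and_true] at hnd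
  rw [adj_Gr] at hab hbc hcd
  have hvac : (a : ℕ) + 1 ≠ (c : ℕ) + 1 := by
    intro h; exact hnd.1.2.1 (Fin.ext (by omega))
  have hvbd : (b : ℕ) + 1 ≠ (d : ℕ) + 1 := by
    intro h; exact hnd.2.1.2 (Fin.ext (by omega))
  have hac' : ¬ (R ((a:ℕ)+1) ((c:ℕ)+1) ∨ R ((c:ℕ)+1) ((a:ℕ)+1)) :=
    fun h => hac ⟨hvac, h⟩
  have hbd' : ¬ (R ((b:ℕ)+1) ((d:ℕ)+1) ∨ R ((d:ℕ)+1) ((b:ℕ)+1)) :=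
    fun h => hbd ⟨hvbd, h⟩
  have h1 := mid hab.2 hbc.2 hac'
  have h2 := mid hbc.2 hcd.2 hbd'
  exact hbc.1 (R_antisymm h1.2 h2.1)

/-- Build a walk with prescribed support from a chain. -/
lemma exists_walk {V : Type*} (G : SimpleGraph V) :
    ∀ (l : List V) (a : V), List.Chain G.Adj a l →
      ∃ (b : V) (p : G.Walk a b), p.support = a :: l := by
  intro l
  induction l with
  | nil => exact fun a _ => ⟨a, .nil, rfl⟩
  | cons c l ih =>
    intro a h
    simp only [List.Chain, List.isChain_cons_cons] at h
    obtain ⟨b, p, hp⟩ := ih c h.2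
    exact ⟨b, .cons h.1 p, by simp [hp]⟩

lemma traceable_of_list {V : Type*} [Fintype V] [DecidableEq V] (G : SimpleGraph V)
    (l : List V) (hne : l ≠ []) (hch : l.Chain' G.Adj) (hnd : l.Nodup)
    (hlen : l.length = Fintype.card V) : Traceable G := by
  match l, hne with
  | a :: l, _ =>
    obtain ⟨b, p, hp⟩ := exists_walk G l a hch
    refine ⟨a, b, p, fun v => ?_⟩
    rw [hp]
    have hmem : v ∈ a :: l := by
      have hcard : (a :: l).toFinset = Finset.univ := by
        apply Finset.eq_univ_of_card
        rw [List.toFinset_card_of_nodup hnd, hlen]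
      have : v ∈ (a :: l).toFinset := by rw [hcard]; exact Finset.mem_univ v
      exact List.mem_toFinset.mp this
    exact List.count_eq_one_of_mem hnd hmem

lemma chain'_map_of_mem {α β : Type*} {S : α → α → Prop} {T : β → β → Prop} (f : α → β) :
    ∀ l : List α, l.Chain' S → (∀ x ∈ l, ∀ y ∈ l, S x y → T (f x) (f y)) →
      (l.map f).Chain' T := by
  intro l
  induction l with
  | nil => simp [List.Chain']
  | cons a l ih =>
    intro h hf
    cases l with
    | nil => simp [List.Chain']
    | cons b l =>
      unfold List.Chain' at h ⊢
      rw [List.isChain_cons_cons] at h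
      rw [List.map_cons, List.map_cons, List.isChain_cons_cons]
      constructor
      · exact hf a (by simp) b (by simp) h.1
      · rw [← List.map_cons]
        exact ih h.2 (fun x hx y hy hxy => hf x (by simp [hx]) y (by simp [hy]) hxy)

end Stmt5Aux

open Stmt5Aux in
/-- For every `k ≥ 1` there is a traceable cograph on `n = 2^k - 1` vertices
with at most `2^k · k` edges. -/
theorem stmt_5 (k : ℕ) (hk : 1 ≤ k) :
    ∃ G : SimpleGraph (Fin (2 ^ k - 1)), IsCograph G ∧ Traceable G ∧
      G.edgeSet.ncard ≤ 2 ^ k * k := by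
  classical
  have h2k : 2 ≤ 2 ^ k := by
    calc (2:ℕ) = 2 ^ 1 := rfl
      _ ≤ 2 ^ k := Nat.pow_le_pow_right (by omega) hk
  have hn : 0 < 2 ^ k - 1 := by omega
  set f : ℕ → Fin (2 ^ k - 1) := fun x => ⟨(x - 1) % (2 ^ k - 1), Nat.mod_lt _ hn⟩ with hf
  have hfval : ∀ x, 1 ≤ x → x ≤ 2 ^ k - 1 → ((f x : ℕ)) = x - 1 := by
    intro x h1 h2
    simp only [hf]
    exact Nat.mod_eq_of_lt (by omega)
  refine ⟨Gr (2 ^ k - 1), cograph_Gr _, ?_, ?_⟩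
  · -- Traceable
    apply traceable_of_list (Gr _) ((ino k 1).map f)
    · apply List.ne_nil_of_length_pos
      rw [List.length_map, length_ino]; omega
    · apply chain'_map_of_mem f _ (chain_ino k 1 le_rfl)
      intro x hx y hy hxy
      obtain ⟨hx1, hx2⟩ := bounds_of_mem_ino hx
      obtain ⟨hy1, hy2⟩ := bounds_of_mem_ino hy
      show A ((f x : ℕ) + 1) ((f y : ℕ) + 1)
      rw [hfval x hx1 hx2, hfval y hy1 hy2,
        Nat.sub_add_cancel hx1, Nat.sub_add_cancel hy1]
      exact hxy
    · apply List.Nodup.map_on _ (nodup_ino k 1 le_rfl)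
      intro x hx y hy hxy
      obtain ⟨hx1, hx2⟩ := bounds_of_mem_ino hx
      obtain ⟨hy1, hy2⟩ := bounds_of_mem_ino hy
      have := congrArg Fin.val hxy
      rw [hfval x hx1 hx2, hfval y hy1 hy2] at this
      omega
    · rw [List.length_map, length_ino, Fintype.card_fin]
  · -- edge count
    set F : Fin (2 ^ k - 1) × Fin k → Sym2 (Fin (2 ^ k - 1)) :=
      fun p => s(p.1, f (((p.1 : ℕ) + 1) / 2 ^ (p.2 : ℕ))) with hF
    have key : ∀ (a b : Fin (2 ^ k - 1)) (t : ℕ), ((b : ℕ) + 1) / 2 ^ t = (a : ℕ) + 1 →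
        ∃ p : Fin (2 ^ k - 1) × Fin k, F p = s(a, b) := by
      intro a b t ht
      have hle : 2 ^ t ≤ (b : ℕ) + 1 := by
        have h1 := Nat.div_mul_le_self ((b : ℕ) + 1) (2 ^ t)
        rw [ht] at h1
        calc 2 ^ t ≤ ((a : ℕ) + 1) * 2 ^ t := Nat.le_mul_of_pos_left _ (by omega)
          _ ≤ (b : ℕ) + 1 := h1
      have htk : t < k := by
        have hb : (b : ℕ) + 1 < 2 ^ k := by have := b.isLt; omega
        have : 2 ^ t < 2 ^ k := by omega
        exact (Nat.pow_lt_pow_iff_right (by omega)).mp this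
      refine ⟨(b, ⟨t, htk⟩), ?_⟩
      have hfa : f (((b : ℕ) + 1) / 2 ^ t) = a := by
        apply Fin.ext
        rw [ht, hfval ((a : ℕ) + 1) (by omega) (by have := a.isLt; omega)]
        omega
      simp only [hF, hfa]
      exact Sym2.eq_swap
    have hsub : (Gr (2 ^ k - 1)).edgeSet ⊆ ↑(Finset.image F Finset.univ) := by
      intro e he
      induction e using Sym2.ind with
      | _ a b =>
        rw [SimpleGraph.mem_edgeSet, adj_Gr] at he
        obtain ⟨-, hcomp⟩ := he
        rw [Finset.mem_coe, Finset.mem_image]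
        rcases hcomp with ⟨t, ht⟩ | ⟨t, ht⟩
        · obtain ⟨p, hp⟩ := key a b t ht
          exact ⟨p, Finset.mem_univ _, hp⟩
        · obtain ⟨p, hp⟩ := key b a t ht
          exact ⟨p, Finset.mem_univ _, by rw [hp]; exact Sym2.eq_swap⟩
    calc (Gr (2 ^ k - 1)).edgeSet.ncard
        ≤ (↑(Finset.image F Finset.univ) : Set (Sym2 (Fin (2 ^ k - 1)))).ncard :=
          Set.ncard_le_ncard hsub (Finset.finite_toSet _)
      _ = (Finset.image F Finset.univ).card := Set.ncard_coe_finset _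
      _ ≤ (Finset.univ : Finset (Fin (2 ^ k - 1) × Fin k)).card := Finset.card_image_le
      _ = (2 ^ k - 1) * k := by simp
      _ ≤ 2 ^ k * k := Nat.mul_le_mul_right _ (by omega)
end

section
/- Let d ≥ 2 be an integer and let G be a traceable simple graph on n vertices with modular-width at most d. Then G has at least (1/4)·n·log_d(n) edges, where log_d denotes the logarithm to base d. -/
/-- `M` is a module of `G`: every vertex outside `M` is adjacent either to all
vertices of `M` or to none of them. -/
def IsModule {V : Type*} (G : SimpleGraph V) (M : Set V) : Prop :=
  ∀ u ∈ M, ∀ v ∈ M, ∀ w ∉ M, (G.Adj u w ↔ G.Adj v w)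

/-- Auxiliary (fuel-based) definition of "modular-width at most `m`".  A graph has
modular-width at most `m` iff it has at most one vertex, or its vertex set admits a
partition into at least two modules such that either there are at most `m` parts
(substitution into a pattern with at most `m` vertices), or the quotient is complete
(a join) or edgeless (a disjoint union), and each part induces a graph of
modular-width at most `m`.  The fuel bounds the recursion depth; `fuel = |V|` suffices. -/
def MWleAux (m : ℕ) : (fuel : ℕ) → (V : Type) → [Fintype V] → [DecidableEq V] →
    SimpleGraph V → Prop
  | 0, V, _, _, _ => Fintype.card V ≤ 1
  | fuel + 1, V, _, _, G =>
      Fintype.card V ≤ 1 ∨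
      ∃ P : Finpartition (Finset.univ : Finset V),
        2 ≤ P.parts.card ∧
        (∀ M ∈ P.parts, IsModule G (↑M : Set V)) ∧
        (P.parts.card ≤ m ∨
          (∀ M ∈ P.parts, ∀ M' ∈ P.parts, M ≠ M' → ∀ u ∈ M, ∀ v ∈ M', G.Adj u v) ∨
          (∀ M ∈ P.parts, ∀ M' ∈ P.parts, M ≠ M' → ∀ u ∈ M, ∀ v ∈ M', ¬ G.Adj u v)) ∧
        (∀ M ∈ P.parts, MWleAux m fuel _ (G.induce (↑M : Set V)))

/-- The modular-width of `G` is at most `m`. -/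
def MWle (m : ℕ) (V : Type) [Fintype V] [DecidableEq V] (G : SimpleGraph V) : Prop :=
  MWleAux m (Fintype.card V) V G

open Finset List Real
namespace Density


/-- Fiberwise decomposition of a list sum. -/
lemma list_fiber_sum {α κ M : Type*} [DecidableEq κ] [AddCommMonoid M]
    (L : List α) (key : α → κ) (K : Finset κ)
    (hK : ∀ x ∈ L, key x ∈ K) (g : α → M) :
    (L.map g).sum = ∑ k ∈ K, ((L.filter (fun x => key x = k)).map g).sum := by
  induction L with
  | nil => simp
  | cons x t ih =>
    have hx : key x ∈ K := hK x (by simp)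
    have ht : ∀ y ∈ t, key y ∈ K := fun y hy => hK y (by simp [hy])
    rw [List.map_cons, List.sum_cons, ih ht]
    have hsplit : ∀ k ∈ K,
        (((x :: t).filter (fun y => key y = k)).map g).sum
          = (if k = key x then g x else 0)
            + ((t.filter (fun y => key y = k)).map g).sum := by
      intro k _
      by_cases h : key x = k
      · simp [List.filter_cons, h, eq_comm]
      · simp [List.filter_cons, h, Ne.symm h]
    rw [Finset.sum_congr rfl hsplit, Finset.sum_add_distrib,
      Finset.sum_ite_eq' K (key x) (fun _ => g x)]
    simp [hx]

/-- adjacent pairs of a list -/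
def zp {α : Type*} (w : List α) : List (α × α) := w.zip w.tail

@[simp] lemma zp_nil {α : Type*} : zp ([] : List α) = [] := rfl
@[simp] lemma zp_single {α : Type*} (a : α) : zp [a] = [] := rfl
@[simp] lemma zp_cons_cons {α : Type*} (a b : α) (t : List α) :
    zp (a :: b :: t) = (a, b) :: zp (b :: t) := by
  simp [zp, List.zip]

/-- count of a label is at most 1 + number of zp-pairs whose second has that label. -/
lemma count_le_pairs {γ : Type*} [DecidableEq γ] (i : γ) :
    ∀ w : List (γ × ℕ),
      w.countP (fun e => e.1 = i)
        ≤ (zp w).countP (fun q => q.2.1 = i)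
          + (match w with | [] => 0 | e :: _ => if e.1 = i then 1 else 0) := by
  intro w
  induction w with
  | nil => simp
  | cons e t ih =>
    match t, ih with
    | [], _ => by_cases h : e.1 = i <;> simp [List.countP_cons, h]
    | f :: t', ih =>
      rw [zp_cons_cons, List.countP_cons, List.countP_cons]
      by_cases h : e.1 = i <;> by_cases h2 : f.1 = i <;>
        simp [h, h2] at ih ⊢ <;> omega

lemma pairs_fst_le_count {γ : Type*} [DecidableEq γ] (j : γ) :
    ∀ w : List (γ × ℕ),
      (zp w).countP (fun q => q.1.1 = j) ≤ w.countP (fun e => e.1 = j) := by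
  intro w
  induction w with
  | nil => simp
  | cons e t ih =>
    match t, ih with
    | [], _ => simp
    | f :: t', ih =>
      rw [zp_cons_cons, List.countP_cons, List.countP_cons]
      by_cases h : e.1 = j <;> simp [h] <;> omega

/-- every entry of a list of length ≥ 2 appears in some adjacent pair. -/
lemma mem_pair_of_mem {α : Type*} :
    ∀ (w : List α), 2 ≤ w.length → ∀ e ∈ w,
      ∃ q ∈ zp w, q.1 = e ∨ q.2 = e := by
  intro w
  induction w with
  | nil => simp
  | cons x t ih =>
    intro hlen e he
    match t, ih, hlen, he with
    | f :: t', ih, _, he =>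
      rw [zp_cons_cons]
      rcases List.mem_cons.1 he with rfl | he'
      · exact ⟨(e, f), by simp⟩
      · match t', he' with
        | [], he' => simp at he'; exact ⟨(x, f), by simp [he']⟩
        | g :: t'', he' =>
          obtain ⟨q, hq, hor⟩ := ih (by simp) e he'
          exact ⟨q, List.mem_cons_of_mem _ hq, hor⟩

lemma mem_of_mem_zp {α : Type*} {w : List α} {q : α × α} (hq : q ∈ zp w) :
    q.1 ∈ w ∧ q.2 ∈ w := by
  have h1 := List.of_mem_zip hq
  exact ⟨h1.1, List.mem_of_mem_tail h1.2⟩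



lemma list_sum_map_const' {α : Type*} (L : List α) (c : ℝ) :
    (L.map (fun _ => c)).sum = L.length * c := by
  induction L with
  | nil => simp
  | cons x t ih => simp [ih]; ring

lemma list_sum_map_sub {α : Type*} (L : List α) (f g : α → ℝ) :
    (L.map (fun x => f x - g x)).sum = (L.map f).sum - (L.map g).sum := by
  induction L with
  | nil => simp
  | cons x t ih => simp [ih]; ring

lemma list_sum_map_add {α : Type*} (L : List α) (f g : α → ℝ) :
    (L.map (fun x => f x + g x)).sum = (L.map f).sum + (L.map g).sum := by
  induction L with
  | nil => simp
  | cons x t ih => simp [ih]; ring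

lemma list_sum_map_mul_right {α : Type*} (L : List α) (f : α → ℝ) (c : ℝ) :
    (L.map (fun x => f x * c)).sum = (L.map f).sum * c := by
  induction L with
  | nil => simp
  | cons x t ih => simp [ih]; ring

lemma list_cast_sum (xs : List ℕ) :
    ((xs.sum : ℕ) : ℝ) = (xs.map (fun x : ℕ => (x : ℝ))).sum := by
  induction xs with
  | nil => simp
  | cons x t ih => simp [ih]

/-- Jensen-type step via `log x ≤ x - 1`. -/
lemma stepA (xs : List ℕ) (hpos : ∀ x ∈ xs, 1 ≤ x) (hne : xs ≠ []) :
    (xs.sum : ℝ) * Real.log xs.sum - (xs.sum : ℝ) * Real.log xs.length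
      ≤ (xs.map (fun x : ℕ => (x : ℝ) * Real.log x)).sum := by
  have hn : (1 : ℝ) ≤ (xs.length : ℝ) := by
    have := List.length_pos_iff.2 hne
    exact_mod_cast this
  have ha : (1 : ℝ) ≤ (xs.sum : ℝ) := by
    obtain ⟨x, hx⟩ := List.exists_mem_of_ne_nil xs hne
    have : 1 ≤ xs.sum := le_trans (hpos x hx) (List.single_le_sum (fun y _ => Nat.zero_le y) x hx)
    exact_mod_cast this
  have hn0 : (0:ℝ) < (xs.length : ℝ) := lt_of_lt_of_le one_pos hn
  have ha0 : (0:ℝ) < (xs.sum : ℝ) := lt_of_lt_of_le one_pos ha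
  have key : ∀ x ∈ xs,
      (fun x : ℕ => (x:ℝ) * Real.log xs.sum - ((x:ℝ) * Real.log xs.length + (x:ℝ) * Real.log x)) x
      ≤ (fun x : ℕ => (xs.sum:ℝ) / (xs.length:ℝ) - (x:ℝ)) x := by
    intro x hx
    have hx1 : (1:ℝ) ≤ (x:ℝ) := by exact_mod_cast hpos x hx
    have hx0 : (0:ℝ) < (x:ℝ) := lt_of_lt_of_le one_pos hx1
    have hlog : Real.log ((xs.sum:ℝ) / ((xs.length:ℝ) * x)) ≤ (xs.sum:ℝ) / ((xs.length:ℝ) * x) - 1 :=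
      Real.log_le_sub_one_of_pos (by positivity)
    have hexp : Real.log ((xs.sum:ℝ) / ((xs.length:ℝ) * x))
        = Real.log xs.sum - Real.log xs.length - Real.log x := by
      rw [Real.log_div (ne_of_gt ha0) (by positivity),
        Real.log_mul (ne_of_gt hn0) (ne_of_gt hx0)]
      ring
    have h2 : (x:ℝ) * Real.log ((xs.sum:ℝ) / ((xs.length:ℝ) * x))
        ≤ (x:ℝ) * ((xs.sum:ℝ) / ((xs.length:ℝ) * x) - 1) :=
      mul_le_mul_of_nonneg_left hlog (le_of_lt hx0)
    have h3 : (x:ℝ) * ((xs.sum:ℝ) / ((xs.length:ℝ) * x) - 1) = (xs.sum:ℝ)/(xs.length:ℝ) - x := by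
      field_simp
    rw [hexp, h3] at h2
    simp only []
    nlinarith [h2]
  have hsum := List.sum_le_sum key
  have hL : (xs.map (fun x : ℕ =>
        (x:ℝ) * Real.log xs.sum - ((x:ℝ) * Real.log xs.length + (x:ℝ) * Real.log x))).sum
      = (xs.sum:ℝ) * Real.log xs.sum
        - ((xs.sum:ℝ) * Real.log xs.length + (xs.map (fun x : ℕ => (x:ℝ) * Real.log x)).sum) := by
    rw [list_sum_map_sub, list_sum_map_add]
    rw [show (fun x : ℕ => (x:ℝ) * Real.log xs.sum) = (fun x : ℕ => (fun y : ℕ => (y:ℝ)) x * Real.log xs.sum) from rfl,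
      list_sum_map_mul_right,
      show (fun x : ℕ => (x:ℝ) * Real.log xs.length) = (fun x : ℕ => (fun y : ℕ => (y:ℝ)) x * Real.log xs.length) from rfl,
      list_sum_map_mul_right, ← list_cast_sum]
  have hR : (xs.map (fun x : ℕ => (xs.sum:ℝ)/(xs.length:ℝ) - (x:ℝ))).sum
      = (xs.length:ℝ) * ((xs.sum:ℝ)/(xs.length:ℝ)) - (xs.sum:ℝ) := by
    rw [show (fun x : ℕ => (xs.sum:ℝ)/(xs.length:ℝ) - (x:ℝ))
        = (fun x : ℕ => (fun _ : ℕ => (xs.sum:ℝ)/(xs.length:ℝ)) x - (fun y : ℕ => (y:ℝ)) x) from rfl,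
      list_sum_map_sub, list_sum_map_const', ← list_cast_sum]
  rw [hL, hR] at hsum
  have hdiv : (xs.length:ℝ) * ((xs.sum:ℝ)/(xs.length:ℝ)) = (xs.sum:ℝ) := by field_simp
  rw [hdiv] at hsum
  linarith

/-- entropy bound: `∑ aᵢ (log ℓ − log aᵢ) ≤ ℓ log s ≤ ℓ log d`. -/
lemma stepB {γ : Type*} [DecidableEq γ] (T : Finset γ) (aa : γ → ℕ)
    (hpos : ∀ i ∈ T, 1 ≤ aa i) (d : ℕ) (hd : 2 ≤ d) (hsd : T.card ≤ d) :
    ∑ i ∈ T, (aa i : ℝ) * (Real.log (∑ j ∈ T, aa j : ℕ) - Real.log (aa i))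
      ≤ ((∑ j ∈ T, aa j : ℕ) : ℝ) * Real.log d := by
  rcases T.eq_empty_or_nonempty with rfl | hT
  · simp
  have hs1 : 1 ≤ T.card := Finset.card_pos.2 hT
  set ℓ : ℕ := ∑ j ∈ T, aa j with hldef
  have hl1 : 1 ≤ ℓ := by
    obtain ⟨i, hi⟩ := hT
    exact le_trans (hpos i hi) (Finset.single_le_sum (fun j _ => Nat.zero_le (aa j)) hi)
  have hl0 : (0:ℝ) < (ℓ:ℝ) := by exact_mod_cast hl1
  have hs0 : (0:ℝ) < (T.card:ℝ) := by exact_mod_cast hs1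
  have key : ∀ i ∈ T, (aa i : ℝ) * (Real.log ℓ - Real.log (aa i)) - (aa i : ℝ) * Real.log T.card
      ≤ (ℓ:ℝ)/(T.card:ℝ) - (aa i : ℝ) := by
    intro i hi
    have hai : (1:ℝ) ≤ (aa i : ℝ) := by exact_mod_cast hpos i hi
    have hai0 : (0:ℝ) < (aa i : ℝ) := lt_of_lt_of_le one_pos hai
    have hlog : Real.log ((ℓ:ℝ) / ((T.card:ℝ) * (aa i : ℝ)))
        ≤ (ℓ:ℝ) / ((T.card:ℝ) * (aa i:ℝ)) - 1 := Real.log_le_sub_one_of_pos (by positivity)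
    have hexp : Real.log ((ℓ:ℝ) / ((T.card:ℝ) * (aa i:ℝ)))
        = Real.log ℓ - Real.log T.card - Real.log (aa i) := by
      rw [Real.log_div (ne_of_gt hl0) (by positivity),
        Real.log_mul (ne_of_gt hs0) (ne_of_gt hai0)]
      ring
    have h2 := mul_le_mul_of_nonneg_left hlog (le_of_lt hai0)
    rw [hexp] at h2
    have h3 : (aa i:ℝ) * ((ℓ:ℝ) / ((T.card:ℝ) * (aa i:ℝ)) - 1) = (ℓ:ℝ)/(T.card:ℝ) - (aa i:ℝ) := by
      field_simp
    rw [h3] at h2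
    nlinarith [h2]
  have hsum := Finset.sum_le_sum key
  rw [Finset.sum_sub_distrib] at hsum
  have h4 : ∑ i ∈ T, ((ℓ:ℝ)/(T.card:ℝ) - (aa i:ℝ)) = 0 := by
    rw [Finset.sum_sub_distrib, Finset.sum_const, nsmul_eq_mul]
    have : ∑ i ∈ T, (aa i : ℝ) = (ℓ:ℝ) := by
      rw [hldef]
      push_cast
      rfl
    rw [this]
    field_simp
    ring
  rw [h4] at hsum
  have h5 : ∑ i ∈ T, (aa i:ℝ) * Real.log T.card = (ℓ:ℝ) * Real.log T.card := by
    rw [← Finset.sum_mul]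
    congr 1
    rw [hldef]; push_cast; rfl
  rw [h5] at hsum
  have h6 : (ℓ:ℝ) * Real.log T.card ≤ (ℓ:ℝ) * Real.log d := by
    apply mul_le_mul_of_nonneg_left _ (le_of_lt hl0)
    apply Real.log_le_log hs0
    exact_mod_cast hsd
  linarith

lemma stepC (d B n : ℕ) (hd : 2 ≤ d) (hB : 1 ≤ B) (hn : n ≤ 1 + B) :
    Real.log n ≤ (2 * (B:ℝ) - 1) * Real.log d := by
  have hnat : n ≤ d ^ (2 * B - 1) := by
    calc n ≤ 1 + B := hn
    _ ≤ 2 ^ B := by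
        have := Nat.lt_two_pow_self (n := B)
        omega
    _ ≤ d ^ B := Nat.pow_le_pow_left hd B
    _ ≤ d ^ (2 * B - 1) := Nat.pow_le_pow_right (by omega) (by omega)
  have h1 : Real.log n ≤ Real.log ((d:ℝ) ^ (2 * B - 1)) := by
    rcases Nat.eq_zero_or_pos n with rfl | hn0
    · simp
      positivity
    · apply Real.log_le_log (by exact_mod_cast hn0)
      exact_mod_cast hnat
  rw [Real.log_pow] at h1
  have hcast : ((2 * B - 1 : ℕ) : ℝ) = 2 * (B:ℝ) - 1 := by
    have : 1 ≤ 2 * B := by omega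
    push_cast [this]
    ring
  rw [hcast] at h1
  exact h1

lemma stepC' (d x n a ℓ : ℕ) (hd : 2 ≤ d) (hx : 1 ≤ x) (ha : 1 ≤ a)
    (hℓ : ℓ = a + x) (hn : n ≤ 1 + x) :
    Real.log ℓ - Real.log a + Real.log n ≤ 2 * (x:ℝ) * Real.log d := by
  have h1x : (1:ℝ) ≤ 1 + (x:ℝ) := by
    have : (0:ℝ) ≤ (x:ℝ) := Nat.cast_nonneg x
    linarith
  have hlog1 : Real.log ℓ - Real.log a ≤ Real.log (1 + (x:ℝ)) := by
    have ha0 : (0:ℝ) < (a:ℝ) := by exact_mod_cast ha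
    have hl0 : (0:ℝ) < (ℓ:ℝ) := by
      have : 1 ≤ ℓ := by omega
      exact_mod_cast this
    rw [← Real.log_div (ne_of_gt hl0) (ne_of_gt ha0)]
    apply Real.log_le_log (by positivity)
    rw [div_le_iff₀ ha0]
    have hle : (ℓ:ℝ) = (a:ℝ) + (x:ℝ) := by exact_mod_cast congrArg (Nat.cast : ℕ → ℝ) hℓ
    have ha1 : (1:ℝ) ≤ (a:ℝ) := by exact_mod_cast ha
    nlinarith [hle, ha1]
  have hlog2 : Real.log n ≤ Real.log (1 + (x:ℝ)) := by
    rcases Nat.eq_zero_or_pos n with rfl | hn0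
    · simp
      exact Real.log_nonneg h1x
    · apply Real.log_le_log (by exact_mod_cast hn0)
      exact_mod_cast hn
  have hlog3 : Real.log (1 + (x:ℝ)) ≤ (x:ℝ) * Real.log 2 := by
    have hnat : 1 + x ≤ 2 ^ x := by
      have := Nat.lt_two_pow_self (n := x)
      omega
    have : Real.log (1 + (x:ℝ)) ≤ Real.log ((2:ℝ) ^ x) := by
      apply Real.log_le_log (by linarith)
      exact_mod_cast hnat
    rwa [Real.log_pow] at this
  have hlog4 : Real.log 2 ≤ Real.log d := by
    apply Real.log_le_log (by norm_num)
    exact_mod_cast hd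
  have hx0 : (0:ℝ) ≤ (x:ℝ) := Nat.cast_nonneg x
  nlinarith [hlog1, hlog2, hlog3, hlog4, mul_le_mul_of_nonneg_left hlog4 hx0]


section Word
variable {γ : Type*} [DecidableEq γ]

def labs (w : List (γ × ℕ)) : Finset γ := (w.map Prod.fst).toFinset

def am (w : List (γ × ℕ)) (i : γ) : ℕ :=
  ((w.filter (fun e => e.1 = i)).map Prod.snd).sum

def nr (w : List (γ × ℕ)) (i : γ) : ℕ := (w.filter (fun e => e.1 = i)).length

def tot (w : List (γ × ℕ)) : ℕ := (w.map Prod.snd).sum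

def adjw (w : List (γ × ℕ)) (i j : γ) : Prop :=
  ∃ q ∈ zp w, (q.1.1 = i ∧ q.2.1 = j) ∨ (q.1.1 = j ∧ q.2.1 = i)

instance {w : List (γ × ℕ)} {i j : γ} : Decidable (adjw w i j) :=
  List.decidableBEx _ _

def nbrs (w : List (γ × ℕ)) (i : γ) : Finset γ :=
  (labs w).filter (fun j => j ≠ i ∧ adjw w i j)

lemma mem_labs {w : List (γ × ℕ)} {i : γ} : i ∈ labs w ↔ ∃ e ∈ w, e.1 = i := by
  simp [labs]

lemma sum_am (w : List (γ × ℕ)) : ∑ i ∈ labs w, am w i = tot w := by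
  rw [tot, list_fiber_sum (M := ℕ) w Prod.fst (labs w)
    (fun e he => mem_labs.2 ⟨e, he, rfl⟩) Prod.snd]
  rfl

lemma sum_logmass (w : List (γ × ℕ)) :
    (w.map (fun e => (e.2:ℝ) * Real.log e.2)).sum
      = ∑ i ∈ labs w, ((w.filter (fun e => e.1 = i)).map (fun e => (e.2:ℝ) * Real.log e.2)).sum :=
  list_fiber_sum w Prod.fst (labs w) (fun e he => mem_labs.2 ⟨e, he, rfl⟩) _

lemma am_pos {w : List (γ × ℕ)} (hpos : ∀ e ∈ w, 1 ≤ e.2) {i : γ} (hi : i ∈ labs w) :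
    1 ≤ am w i := by
  obtain ⟨e, he, hei⟩ := mem_labs.1 hi
  have hef : e ∈ w.filter (fun e => e.1 = i) := List.mem_filter.2 ⟨he, by simp [hei]⟩
  have : e.2 ∈ (w.filter (fun e => e.1 = i)).map Prod.snd := List.mem_map.2 ⟨e, hef, rfl⟩
  exact le_trans (hpos e he) (List.single_le_sum (fun y _ => Nat.zero_le y) _ this)

lemma nr_pos {w : List (γ × ℕ)} {i : γ} (hi : i ∈ labs w) : 1 ≤ nr w i := by
  obtain ⟨e, he, hei⟩ := mem_labs.1 hi
  have hef : e ∈ w.filter (fun e => e.1 = i) := List.mem_filter.2 ⟨he, by simp [hei]⟩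
  have h := List.length_pos_iff.2 (List.ne_nil_of_mem hef)
  rw [nr]
  omega

lemma nr_le_am {w : List (γ × ℕ)} (hpos : ∀ e ∈ w, 1 ≤ e.2) (i : γ) : nr w i ≤ am w i := by
  rw [nr, am]
  have h : ∀ L : List (γ × ℕ), (∀ e ∈ L, 1 ≤ e.2) → L.length ≤ (L.map Prod.snd).sum := by
    intro L
    induction L with
    | nil => simp
    | cons e t ih =>
      intro h
      have h1 := h e (by simp)
      have h2 := ih (fun x hx => h x (by simp [hx]))
      simp only [List.map_cons, List.sum_cons, List.length_cons]
      omega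
  exact h _ (fun e he => hpos e (List.mem_of_mem_filter he))

lemma filter_ne_nil {w : List (γ × ℕ)} {i : γ} (hi : i ∈ labs w) :
    w.filter (fun e => e.1 = i) ≠ [] := by
  obtain ⟨e, he, hei⟩ := mem_labs.1 hi
  exact List.ne_nil_of_mem (List.mem_filter.2 ⟨he, by simp [hei]⟩)

lemma list_sum_map_one {α : Type*} (L : List α) : (L.map (fun _ => (1:ℕ))).sum = L.length := by
  induction L with
  | nil => simp
  | cons x t ih => simp [ih]; omega

/-- The central combinatorial bound: `nᵢ ≤ 1 + Bᵢ`. -/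
lemma nr_le_one_add (w : List (γ × ℕ)) (hpos : ∀ e ∈ w, 1 ≤ e.2)
    (hch : ∀ q ∈ zp w, q.1.1 ≠ q.2.1) (i : γ) :
    nr w i ≤ 1 + ∑ j ∈ nbrs w i, am w j := by
  have h1 : nr w i ≤ (zp w).countP (fun q => q.2.1 = i) + 1 := by
    have hcp := count_le_pairs i w
    have hnr : nr w i = w.countP (fun e => e.1 = i) := by
      rw [nr, List.countP_eq_length_filter]
    have hm : (match w with | [] => 0 | e :: _ => if e.1 = i then 1 else 0) ≤ 1 := by
      rcases w with _ | ⟨e, t⟩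
      · simp
      · by_cases h : e.1 = i <;> simp [h]
    omega
  have h2 : (zp w).countP (fun q => q.2.1 = i) ≤ ∑ j ∈ nbrs w i, nr w j := by
    set L := (zp w).filter (fun q => q.2.1 = i) with hLdef
    have hK : ∀ q ∈ L, q.1.1 ∈ nbrs w i := by
      intro q hq
      have hqzp : q ∈ zp w := List.mem_of_mem_filter hq
      have hq2 : q.2.1 = i := by
        have := List.of_mem_filter hq
        simpa using this
      refine Finset.mem_filter.2 ⟨mem_labs.2 ⟨q.1, (mem_of_mem_zp hqzp).1, rfl⟩, ?_, ?_⟩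
      · rw [← hq2]; exact hch q hqzp
      · exact ⟨q, hqzp, Or.inr ⟨rfl, hq2⟩⟩
    have hlen : L.length = ∑ j ∈ nbrs w i, (L.filter (fun q => q.1.1 = j)).length := by
      have h := list_fiber_sum (M := ℕ) L (fun q => q.1.1) (nbrs w i) hK (fun _ => 1)
      rw [list_sum_map_one] at h
      rw [h]
      exact Finset.sum_congr rfl (fun j _ => by rw [list_sum_map_one])
    rw [List.countP_eq_length_filter, ← hLdef, hlen]
    apply Finset.sum_le_sum
    intro j _
    have hsub : L.filter (fun q => q.1.1 = j) <+ (zp w).filter (fun q => q.1.1 = j) :=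
      List.Sublist.filter _ List.filter_sublist
    calc (L.filter (fun q => q.1.1 = j)).length
        ≤ ((zp w).filter (fun q => q.1.1 = j)).length := hsub.length_le
      _ = (zp w).countP (fun q => q.1.1 = j) := (List.countP_eq_length_filter).symm
      _ ≤ w.countP (fun e => e.1 = j) := pairs_fst_le_count j w
      _ = nr w j := by rw [nr, List.countP_eq_length_filter]
  have h3 : ∑ j ∈ nbrs w i, nr w j ≤ ∑ j ∈ nbrs w i, am w j :=
    Finset.sum_le_sum (fun j _ => nr_le_am hpos j)
  omega

end Word

section Word2
variable {γ : Type*} [DecidableEq γ]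

lemma nbrs_mass_pos {w : List (γ × ℕ)} (hpos : ∀ e ∈ w, 1 ≤ e.2)
    (hch : ∀ q ∈ zp w, q.1.1 ≠ q.2.1) (h2 : 2 ≤ w.length) {i : γ} (hi : i ∈ labs w) :
    1 ≤ ∑ j ∈ nbrs w i, am w j := by
  obtain ⟨e, he, hei⟩ := mem_labs.1 hi
  obtain ⟨q, hq, hor⟩ := mem_pair_of_mem w h2 e he
  have hne := hch q hq
  rcases hor with h | h
  · have h11 : q.1.1 = i := by rw [h, hei]
    have hj : q.2.1 ∈ nbrs w i := by
      refine Finset.mem_filter.2 ⟨mem_labs.2 ⟨q.2, (mem_of_mem_zp hq).2, rfl⟩, ?_, ?_⟩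
      · intro hcon; rw [hcon, ← h11] at hne; exact hne rfl
      · exact ⟨q, hq, Or.inl ⟨h11, rfl⟩⟩
    have hjl : q.2.1 ∈ labs w := mem_labs.2 ⟨q.2, (mem_of_mem_zp hq).2, rfl⟩
    exact le_trans (am_pos hpos hjl)
      (Finset.single_le_sum (fun j _ => Nat.zero_le (am w j)) hj)
  · have h21 : q.2.1 = i := by rw [h, hei]
    have hj : q.1.1 ∈ nbrs w i := by
      refine Finset.mem_filter.2 ⟨mem_labs.2 ⟨q.1, (mem_of_mem_zp hq).1, rfl⟩, ?_, ?_⟩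
      · intro hcon; rw [hcon, ← h21] at hne; exact hne rfl
      · exact ⟨q, hq, Or.inr ⟨rfl, h21⟩⟩
    have hjl : q.1.1 ∈ labs w := mem_labs.2 ⟨q.1, (mem_of_mem_zp hq).1, rfl⟩
    exact le_trans (am_pos hpos hjl)
      (Finset.single_le_sum (fun j _ => Nat.zero_le (am w j)) hj)

lemma deficit_le (w : List (γ × ℕ)) (hpos : ∀ e ∈ w, 1 ≤ e.2) :
    (tot w : ℝ) * Real.log (tot w) - (w.map (fun e => (e.2:ℝ) * Real.log e.2)).sum
      ≤ ∑ i ∈ labs w, ((am w i:ℝ) * (Real.log (tot w) - Real.log (am w i))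
          + (am w i:ℝ) * Real.log (nr w i)) := by
  have hstepA : ∀ i ∈ labs w,
      (am w i : ℝ) * Real.log (am w i) - (am w i:ℝ) * Real.log (nr w i)
        ≤ ((w.filter (fun e => e.1 = i)).map (fun e => (e.2:ℝ) * Real.log e.2)).sum := by
    intro i hi
    have h := stepA ((w.filter (fun e => e.1 = i)).map Prod.snd)
      (by intro x hx
          obtain ⟨e, he, rfl⟩ := List.mem_map.1 hx
          exact hpos e (List.mem_of_mem_filter he))
      (by simpa using filter_ne_nil hi)
    rw [List.map_map] at h
    simpa [am, nr, List.length_map, Function.comp_def] using h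
  have hsum1 : ∑ i ∈ labs w, ((am w i : ℝ) * Real.log (am w i) - (am w i:ℝ) * Real.log (nr w i))
      ≤ (w.map (fun e => (e.2:ℝ) * Real.log e.2)).sum := by
    rw [sum_logmass w]
    exact Finset.sum_le_sum hstepA
  have htot : ((tot w : ℕ) : ℝ) = ∑ i ∈ labs w, (am w i : ℝ) := by
    rw [← sum_am w]; push_cast; rfl
  have hexp : (tot w : ℝ) * Real.log (tot w) = ∑ i ∈ labs w, (am w i : ℝ) * Real.log (tot w) := by
    rw [htot, Finset.sum_mul]
  rw [hexp]
  have : ∑ i ∈ labs w, ((am w i:ℝ) * (Real.log (tot w) - Real.log (am w i))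
          + (am w i:ℝ) * Real.log (nr w i))
      = ∑ i ∈ labs w, (am w i : ℝ) * Real.log (tot w)
        - ∑ i ∈ labs w, ((am w i : ℝ) * Real.log (am w i) - (am w i:ℝ) * Real.log (nr w i)) := by
    rw [← Finset.sum_sub_distrib]
    exact Finset.sum_congr rfl (fun i _ => by ring)
  rw [this]
  linarith

lemma rhs_nonneg (w : List (γ × ℕ)) (N : γ → Finset γ) (d : ℕ) :
    (0:ℝ) ≤ 2 * Real.log d * ∑ i ∈ labs w, ((am w i : ℝ) * ∑ j ∈ N i, (am w j : ℝ)) := by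
  apply mul_nonneg (by positivity)
  apply Finset.sum_nonneg
  intro i _
  apply mul_nonneg (Nat.cast_nonneg _)
  exact Finset.sum_nonneg (fun j _ => Nat.cast_nonneg _)

lemma small_word (w : List (γ × ℕ)) (hlen : w.length ≤ 1) :
    (tot w : ℝ) * Real.log (tot w) - (w.map (fun e => (e.2:ℝ) * Real.log e.2)).sum = 0 := by
  rcases w with _ | ⟨e, t⟩
  · simp [tot]
  · rcases t with _ | ⟨f, t'⟩
    · simp [tot]
    · simp at hlen

/-- Word inequality, case `≤ d` labels. -/
lemma word1 (d : ℕ) (hd : 2 ≤ d) (w : List (γ × ℕ)) (hpos : ∀ e ∈ w, 1 ≤ e.2)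
    (hch : ∀ q ∈ zp w, q.1.1 ≠ q.2.1) (hs : (labs w).card ≤ d) :
    (tot w : ℝ) * Real.log (tot w) - (w.map (fun e => (e.2:ℝ) * Real.log e.2)).sum
      ≤ 2 * Real.log d * ∑ i ∈ labs w, ((am w i : ℝ) * ∑ j ∈ nbrs w i, (am w j : ℝ)) := by
  by_cases h2 : 2 ≤ w.length
  swap
  · rw [small_word w (by omega)]
    exact rhs_nonneg w _ d
  have hlogd : (0:ℝ) ≤ Real.log d := Real.log_natCast_nonneg d
  have htot : ((tot w : ℕ) : ℝ) = ∑ i ∈ labs w, (am w i : ℝ) := by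
    rw [← sum_am w]; push_cast; rfl
  have hB : ∑ i ∈ labs w, (am w i : ℝ) * (Real.log (tot w) - Real.log (am w i))
      ≤ (tot w : ℝ) * Real.log d := by
    have h := stepB (labs w) (am w) (fun i hi => am_pos hpos hi) d hd hs
    rw [sum_am w] at h
    exact h
  have hC : ∀ i ∈ labs w, (am w i : ℝ) * Real.log (nr w i)
      ≤ Real.log d * (2 * ((am w i : ℝ) * (∑ j ∈ nbrs w i, (am w j:ℝ))) - (am w i : ℝ)) := by
    intro i hi
    have hBpos : 1 ≤ ∑ j ∈ nbrs w i, am w j := nbrs_mass_pos hpos hch h2 hi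
    have h := stepC d (∑ j ∈ nbrs w i, am w j) (nr w i) hd hBpos (nr_le_one_add w hpos hch i)
    have hcast : ((∑ j ∈ nbrs w i, am w j : ℕ) : ℝ) = ∑ j ∈ nbrs w i, (am w j : ℝ) := by
      push_cast; rfl
    rw [hcast] at h
    have h' := mul_le_mul_of_nonneg_left h (Nat.cast_nonneg (am w i) : (0:ℝ) ≤ (am w i:ℝ))
    calc (am w i : ℝ) * Real.log (nr w i)
        ≤ (am w i:ℝ) * ((2 * (∑ j ∈ nbrs w i, (am w j:ℝ)) - 1) * Real.log d) := h'
      _ = Real.log d * (2 * ((am w i:ℝ) * (∑ j ∈ nbrs w i, (am w j:ℝ))) - (am w i:ℝ)) := by ring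
  have hCsum : ∑ i ∈ labs w, (am w i:ℝ) * Real.log (nr w i)
      ≤ Real.log d * (2 * (∑ i ∈ labs w, ((am w i:ℝ) * (∑ j ∈ nbrs w i, (am w j:ℝ)))) - (tot w:ℝ)) := by
    calc ∑ i ∈ labs w, (am w i:ℝ) * Real.log (nr w i)
        ≤ ∑ i ∈ labs w, Real.log d * (2 * ((am w i:ℝ)*(∑ j ∈ nbrs w i, (am w j:ℝ))) - (am w i:ℝ)) :=
          Finset.sum_le_sum hC
      _ = Real.log d * ∑ i ∈ labs w, (2 * ((am w i:ℝ)*(∑ j ∈ nbrs w i, (am w j:ℝ))) - (am w i:ℝ)) := by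
          rw [Finset.mul_sum]
      _ = Real.log d * (2 * (∑ i ∈ labs w, ((am w i:ℝ) * (∑ j ∈ nbrs w i, (am w j:ℝ)))) - (tot w:ℝ)) := by
          congr 1
          rw [Finset.sum_sub_distrib, htot, ← Finset.mul_sum]
  have hsplit : ∑ i ∈ labs w, ((am w i:ℝ) * (Real.log (tot w) - Real.log (am w i))
          + (am w i:ℝ) * Real.log (nr w i))
      = ∑ i ∈ labs w, (am w i:ℝ) * (Real.log (tot w) - Real.log (am w i))
        + ∑ i ∈ labs w, (am w i:ℝ) * Real.log (nr w i) := Finset.sum_add_distrib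
  have hD := deficit_le w hpos
  rw [hsplit] at hD
  calc (tot w : ℝ) * Real.log (tot w) - (w.map (fun e => (e.2:ℝ) * Real.log e.2)).sum
      ≤ ∑ i ∈ labs w, (am w i:ℝ) * (Real.log (tot w) - Real.log (am w i))
        + ∑ i ∈ labs w, (am w i:ℝ) * Real.log (nr w i) := hD
    _ ≤ (tot w : ℝ) * Real.log d
        + Real.log d * (2 * (∑ i ∈ labs w, ((am w i:ℝ) * (∑ j ∈ nbrs w i, (am w j:ℝ)))) - (tot w:ℝ)) := by
        exact add_le_add hB hCsum
    _ = 2 * Real.log d * ∑ i ∈ labs w, ((am w i : ℝ) * ∑ j ∈ nbrs w i, (am w j : ℝ)) := by ring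

/-- Word inequality, complete case. -/
lemma word2 (d : ℕ) (hd : 2 ≤ d) (w : List (γ × ℕ)) (hpos : ∀ e ∈ w, 1 ≤ e.2)
    (hch : ∀ q ∈ zp w, q.1.1 ≠ q.2.1) :
    (tot w : ℝ) * Real.log (tot w) - (w.map (fun e => (e.2:ℝ) * Real.log e.2)).sum
      ≤ 2 * Real.log d * ∑ i ∈ labs w, ((am w i : ℝ) * ∑ j ∈ (labs w).erase i, (am w j : ℝ)) := by
  by_cases h2 : 2 ≤ w.length
  swap
  · rw [small_word w (by omega)]
    exact rhs_nonneg w _ d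
  have hlogd : (0:ℝ) ≤ Real.log d := Real.log_natCast_nonneg d
  -- two distinct labels exist
  have hqex : ∃ q ∈ zp w, True := by
    rcases w with _ | ⟨e, t⟩
    · simp at h2
    rcases t with _ | ⟨f, t'⟩
    · simp at h2
    · exact ⟨(e, f), by rw [zp_cons_cons]; simp, trivial⟩
  obtain ⟨q, hq, -⟩ := hqex
  have hq1 : q.1.1 ∈ labs w := mem_labs.2 ⟨q.1, (mem_of_mem_zp hq).1, rfl⟩
  have hq2 : q.2.1 ∈ labs w := mem_labs.2 ⟨q.2, (mem_of_mem_zp hq).2, rfl⟩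
  have hqne := hch q hq
  have hx : ∀ i ∈ labs w, 1 ≤ ∑ j ∈ (labs w).erase i, am w j := by
    intro i hi
    rcases ne_or_eq q.1.1 i with h | h
    · exact le_trans (am_pos hpos hq1)
        (Finset.single_le_sum (fun j _ => Nat.zero_le (am w j)) (Finset.mem_erase.2 ⟨h, hq1⟩))
    · have h2ne : q.2.1 ≠ i := by rw [← h]; exact hqne.symm
      exact le_trans (am_pos hpos hq2)
        (Finset.single_le_sum (fun j _ => Nat.zero_le (am w j)) (Finset.mem_erase.2 ⟨h2ne, hq2⟩))
  have hC : ∀ i ∈ labs w,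
      (am w i:ℝ) * (Real.log (tot w) - Real.log (am w i)) + (am w i:ℝ) * Real.log (nr w i)
        ≤ Real.log d * (2 * ((am w i:ℝ) * (∑ j ∈ (labs w).erase i, (am w j:ℝ)))) := by
    intro i hi
    have hxi := hx i hi
    have hℓ : tot w = am w i + ∑ j ∈ (labs w).erase i, am w j := by
      rw [← sum_am w, ← Finset.add_sum_erase (labs w) (am w) hi]
    have hnb : nbrs w i ⊆ (labs w).erase i := by
      intro j hj
      have := Finset.mem_filter.1 hj
      exact Finset.mem_erase.2 ⟨this.2.1, this.1⟩
    have hn : nr w i ≤ 1 + ∑ j ∈ (labs w).erase i, am w j :=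
      le_trans (nr_le_one_add w hpos hch i)
        (by
          have := Finset.sum_le_sum_of_subset_of_nonneg hnb
            (fun j _ _ => Nat.zero_le (am w j))
          omega)
    have h := stepC' d (∑ j ∈ (labs w).erase i, am w j) (nr w i) (am w i) (tot w)
      hd hxi (am_pos hpos hi) hℓ hn
    have h' := mul_le_mul_of_nonneg_left h (Nat.cast_nonneg (am w i) : (0:ℝ) ≤ (am w i:ℝ))
    have hcast : ((∑ j ∈ (labs w).erase i, am w j : ℕ) : ℝ)
        = ∑ j ∈ (labs w).erase i, (am w j : ℝ) := by push_cast; rfl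
    calc (am w i:ℝ) * (Real.log (tot w) - Real.log (am w i)) + (am w i:ℝ) * Real.log (nr w i)
        = (am w i:ℝ) * (Real.log (tot w) - Real.log (am w i) + Real.log (nr w i)) := by ring
      _ ≤ (am w i:ℝ) * (2 * ((∑ j ∈ (labs w).erase i, am w j : ℕ):ℝ) * Real.log d) := h'
      _ = Real.log d * (2 * ((am w i:ℝ) * (∑ j ∈ (labs w).erase i, (am w j:ℝ)))) := by
          rw [hcast]; ring
  have hD := deficit_le w hpos
  calc (tot w : ℝ) * Real.log (tot w) - (w.map (fun e => (e.2:ℝ) * Real.log e.2)).sum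
      ≤ ∑ i ∈ labs w, ((am w i:ℝ) * (Real.log (tot w) - Real.log (am w i))
          + (am w i:ℝ) * Real.log (nr w i)) := hD
    _ ≤ ∑ i ∈ labs w, Real.log d * (2 * ((am w i:ℝ) * (∑ j ∈ (labs w).erase i, (am w j:ℝ)))) :=
        Finset.sum_le_sum hC
    _ = 2 * Real.log d * ∑ i ∈ labs w, ((am w i : ℝ) * ∑ j ∈ (labs w).erase i, (am w j : ℝ)) := by
        rw [← Finset.mul_sum, ← Finset.mul_sum]; ring
end Word2

section Runs
variable {β : Type*} {γ : Type*} [DecidableEq γ] [Inhabited γ]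

def runs (f : β → γ) : List β → List (List β)
  | [] => []
  | [a] => [[a]]
  | a :: b :: l =>
      if f a = f b then ((a :: (runs f (b :: l)).headI) :: (runs f (b :: l)).tail)
      else [a] :: runs f (b :: l)

def lab (f : β → γ) (r : List β) : γ := (r.map f).headI

@[simp] lemma lab_cons (f : β → γ) (x : β) (s : List β) : lab f (x :: s) = f x := rfl

@[simp] lemma runs_nil (f : β → γ) : runs f [] = [] := rfl
@[simp] lemma runs_single (f : β → γ) (a : β) : runs f [a] = [[a]] := rfl
lemma runs_cons_cons (f : β → γ) (a b : β) (l : List β) :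
    runs f (a :: b :: l)
      = if f a = f b then ((a :: (runs f (b :: l)).headI) :: (runs f (b :: l)).tail)
        else [a] :: runs f (b :: l) := rfl

lemma runs_shape (f : β → γ) : ∀ (t : List β) (b : β),
    ∃ s rs, runs f (b :: t) = (b :: s) :: rs := by
  intro t
  induction t with
  | nil => exact fun b => ⟨[], [], rfl⟩
  | cons c t' ih =>
    intro b
    obtain ⟨s, rs, hs⟩ := ih c
    rw [runs_cons_cons]
    by_cases h : f b = f c
    · rw [if_pos h, hs]
      exact ⟨c :: s, rs, rfl⟩
    · rw [if_neg h]
      exact ⟨[], runs f (c :: t'), rfl⟩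

lemma flatten_runs (f : β → γ) : ∀ l : List β, (runs f l).flatten = l := by
  intro l
  induction l with
  | nil => rfl
  | cons b t ih =>
    rcases t with _ | ⟨c, t'⟩
    · simp
    · obtain ⟨s, rs, hs⟩ := runs_shape f t' c
      rw [runs_cons_cons]
      by_cases h : f b = f c
      · rw [if_pos h, hs]
        rw [hs] at ih
        simp only [List.headI, List.tail, List.flatten_cons] at ih ⊢
        rw [← ih]
        simp
      · rw [if_neg h]
        simp [ih]

lemma runs_ne_nil (f : β → γ) : ∀ l : List β, ∀ r ∈ runs f l, r ≠ [] := by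
  intro l
  induction l with
  | nil => intro r hr; simp at hr
  | cons b t ih =>
    rcases t with _ | ⟨c, t'⟩
    · intro r hr; simp at hr; subst hr; simp
    · obtain ⟨s, rs, hs⟩ := runs_shape f t' c
      rw [runs_cons_cons]
      intro r hr
      by_cases h : f b = f c
      · rw [if_pos h, hs] at hr
        rw [hs] at ih
        simp only [List.headI, List.tail] at hr
        rcases List.mem_cons.1 hr with rfl | hr'
        · simp
        · exact ih r (List.mem_cons_of_mem _ hr')
      · rw [if_neg h] at hr
        rcases List.mem_cons.1 hr with rfl | hr'
        · simp
        · exact ih r hr'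

lemma runs_const (f : β → γ) : ∀ l : List β, ∀ r ∈ runs f l, ∀ x ∈ r, f x = lab f r := by
  intro l
  induction l with
  | nil => intro r hr; simp at hr
  | cons b t ih =>
    rcases t with _ | ⟨c, t'⟩
    · intro r hr x hx
      simp at hr
      subst hr
      simp at hx
      subst hx
      simp
    · obtain ⟨s, rs, hs⟩ := runs_shape f t' c
      rw [runs_cons_cons]
      intro r hr x hx
      by_cases h : f b = f c
      · rw [if_pos h, hs] at hr
        rw [hs] at ih
        simp only [List.headI, List.tail] at hr
        rcases List.mem_cons.1 hr with rfl | hr'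
        · rcases List.mem_cons.1 hx with rfl | hx'
          · simp
          · have hthis := ih (c :: s) (by simp) x hx'
            rw [lab_cons] at hthis ⊢
            rw [hthis, h]
        · exact ih r (List.mem_cons_of_mem _ hr') x hx
      · rw [if_neg h] at hr
        rcases List.mem_cons.1 hr with rfl | hr'
        · simp at hx
          subst hx
          simp
        · exact ih r hr' x hx

lemma runs_infix (f : β → γ) (l : List β) (r : List β) (hr : r ∈ runs f l) : r <:+: l := by
  obtain ⟨L1, L2, hsplit⟩ := List.append_of_mem hr
  have : l = L1.flatten ++ r ++ L2.flatten := by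
    rw [← flatten_runs f l, hsplit]
    simp
  rw [this]
  exact List.infix_append _ _ _

lemma runs_chain {R : β → β → Prop} (f : β → γ) (l : List β) (hch : l.Chain' R) :
    ∀ r ∈ runs f l, r.Chain' R := fun r hr => hch.infix (runs_infix f l r hr)

/-- adjacent runs have different labels. -/
lemma runs_labels_ne (f : β → γ) : ∀ l : List β, ∀ q ∈ zp (runs f l),
    lab f q.1 ≠ lab f q.2 := by
  intro l
  induction l with
  | nil => intro q hq; simp at hq
  | cons b t ih =>
    rcases t with _ | ⟨c, t'⟩
    · intro q hq; simp at hq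
    · obtain ⟨s, rs, hs⟩ := runs_shape f t' c
      rw [runs_cons_cons]
      intro q hq
      by_cases h : f b = f c
      · rw [if_pos h, hs] at hq
        rw [hs] at ih
        simp only [List.headI, List.tail] at hq
        rcases rs with _ | ⟨r', rs'⟩
        · simp at hq
        · rw [zp_cons_cons] at hq
          rcases List.mem_cons.1 hq with rfl | hq'
          · have hthis := ih ((c :: s), r') (by rw [zp_cons_cons]; simp)
            simp only [lab_cons] at hthis ⊢
            rw [h]
            exact hthis
          · exact ih q (by rw [zp_cons_cons]; exact List.mem_cons_of_mem _ hq')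
      · rw [if_neg h, hs] at hq
        rw [hs] at ih
        rw [zp_cons_cons] at hq
        rcases List.mem_cons.1 hq with rfl | hq'
        · simp only [lab_cons]
          exact h
        · exact ih q hq'

/-- adjacent runs have adjacent boundary elements. -/
lemma runs_bdry {R : β → β → Prop} (f : β → γ) : ∀ l : List β, l.Chain' R →
    ∀ q ∈ zp (runs f l), ∃ u ∈ q.1, ∃ v ∈ q.2, R u v := by
  intro l
  induction l with
  | nil => intro _ q hq; simp at hq
  | cons b t ih =>
    rcases t with _ | ⟨c, t'⟩
    · intro _ q hq; simp at hq
    · obtain ⟨s, rs, hs⟩ := runs_shape f t' c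
      rw [runs_cons_cons]
      intro hch q hq
      have hch' : (c :: t').Chain' R := (List.isChain_cons_cons.1 hch).2
      have hRbc : R b c := (List.isChain_cons_cons.1 hch).1
      by_cases h : f b = f c
      · rw [if_pos h, hs] at hq
        have ih' := ih hch'
        rw [hs] at ih'
        simp only [List.headI, List.tail] at hq
        rcases rs with _ | ⟨r', rs'⟩
        · simp at hq
        · rw [zp_cons_cons] at hq
          rcases List.mem_cons.1 hq with rfl | hq'
          · obtain ⟨u, hu, v, hv, hR⟩ := ih' ((c :: s), r') (by rw [zp_cons_cons]; simp)
            exact ⟨u, List.mem_cons_of_mem _ hu, v, hv, hR⟩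
          · exact ih' q (by rw [zp_cons_cons]; exact List.mem_cons_of_mem _ hq')
      · rw [if_neg h, hs] at hq
        have ih' := ih hch'
        rw [hs] at ih'
        rw [zp_cons_cons] at hq
        rcases List.mem_cons.1 hq with rfl | hq'
        · exact ⟨b, by simp, c, by simp, hRbc⟩
        · exact ih' q hq'

end Runs

section Wrd
variable {β : Type*} {γ : Type*} [DecidableEq γ] [Inhabited γ]

def wrd (f : β → γ) (l : List β) : List (γ × ℕ) :=
  (runs f l).map (fun r => (lab f r, r.length))

lemma zp_map' {α δ : Type*} (g : α → δ) (L : List α) :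
    zp (L.map g) = (zp L).map (Prod.map g g) := by
  rcases L with _ | ⟨x, t⟩
  · rfl
  · show ((x :: t).map g).zip (t.map g) = _
    rw [List.zip_map]
    rfl

lemma wrd_pos (f : β → γ) (l : List β) : ∀ e ∈ wrd f l, 1 ≤ e.2 := by
  intro e he
  obtain ⟨r, hr, rfl⟩ := List.mem_map.1 he
  have := runs_ne_nil f l r hr
  have := List.length_pos_iff.2 this
  omega

lemma wrd_chain (f : β → γ) (l : List β) : ∀ q ∈ zp (wrd f l), q.1.1 ≠ q.2.1 := by
  intro q hq
  rw [wrd, zp_map'] at hq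
  obtain ⟨q', hq', rfl⟩ := List.mem_map.1 hq
  exact runs_labels_ne f l q' hq'

lemma wrd_tot (f : β → γ) (l : List β) : tot (wrd f l) = l.length := by
  rw [tot, wrd, List.map_map]
  have : (runs f l).map (Prod.snd ∘ fun r => (lab f r, r.length)) = (runs f l).map List.length := rfl
  rw [this, ← List.length_flatten, flatten_runs]

lemma wrd_logsum (f : β → γ) (l : List β) :
    ((wrd f l).map (fun e => (e.2:ℝ) * Real.log e.2)).sum
      = ((runs f l).map (fun r => (r.length:ℝ) * Real.log r.length)).sum := by
  rw [wrd, List.map_map]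
  rfl

lemma list_sum_filter_ite {α : Type*} (L : List α) (p : α → Bool) (g : α → ℕ) :
    ((L.filter p).map g).sum = (L.map (fun r => if p r then g r else 0)).sum := by
  induction L with
  | nil => simp
  | cons x t ih =>
    rw [List.filter_cons]
    by_cases h : p x <;> simp [h, ih]

lemma wrd_am (f : β → γ) (l : List β) (i : γ) :
    am (wrd f l) i = l.countP (fun x => f x = i) := by
  rw [am, wrd]
  rw [List.filter_map, List.map_map]
  have hcomp : ((fun (e : γ × ℕ) => decide (e.1 = i)) ∘ (fun r => (lab f r, r.length)))
      = fun r => decide (lab f r = i) := rfl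
  rw [hcomp]
  have h2 : (Prod.snd ∘ fun r => (lab f r, r.length)) = List.length (α := β) := rfl
  rw [h2]
  rw [list_sum_filter_ite (runs f l) (fun r => decide (lab f r = i)) List.length]
  conv_rhs => rw [← flatten_runs f l]
  rw [List.countP_flatten]
  congr 1
  apply List.map_congr_left
  intro r hr
  by_cases h : lab f r = i
  · rw [if_pos (by simp [h])]
    symm
    apply List.countP_eq_length.2
    intro x hx
    simp [runs_const f l r hr x hx, h]
  · rw [if_neg (by simp [h])]
    symm
    rw [List.countP_eq_zero]
    intro x hx
    simp [runs_const f l r hr x hx, h]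

lemma mem_labs_wrd {f : β → γ} {l : List β} {i : γ} (hi : i ∈ labs (wrd f l)) :
    ∃ x ∈ l, f x = i := by
  obtain ⟨e, he, hei⟩ := mem_labs.1 hi
  obtain ⟨r, hr, rfl⟩ := List.mem_map.1 he
  have hne := runs_ne_nil f l r hr
  obtain ⟨x, hx⟩ := List.exists_mem_of_ne_nil r hne
  refine ⟨x, ?_, ?_⟩
  · rw [← flatten_runs f l]
    exact List.mem_flatten.2 ⟨r, hr, hx⟩
  · rw [runs_const f l r hr x hx]
    exact hei

lemma wrd_adj {R : β → β → Prop} (f : β → γ) (l : List β) (hch : l.Chain' R) {i j : γ}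
    (hadj : adjw (wrd f l) i j) :
    ∃ u ∈ l, ∃ v ∈ l, ((f u = i ∧ f v = j) ∨ (f u = j ∧ f v = i)) ∧ R u v := by
  obtain ⟨q, hq, hor⟩ := hadj
  rw [wrd, zp_map'] at hq
  obtain ⟨q', hq', rfl⟩ := List.mem_map.1 hq
  obtain ⟨u, hu, v, hv, hR⟩ := runs_bdry f l hch q' hq'
  have hq'1 : q'.1 ∈ runs f l := (mem_of_mem_zp hq').1
  have hq'2 : q'.2 ∈ runs f l := (mem_of_mem_zp hq').2
  have hfu : f u = lab f q'.1 := runs_const f l q'.1 hq'1 u hu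
  have hfv : f v = lab f q'.2 := runs_const f l q'.2 hq'2 v hv
  have hul : u ∈ l := by rw [← flatten_runs f l]; exact List.mem_flatten.2 ⟨q'.1, hq'1, hu⟩
  have hvl : v ∈ l := by rw [← flatten_runs f l]; exact List.mem_flatten.2 ⟨q'.2, hq'2, hv⟩
  refine ⟨u, hul, v, hvl, ?_, hR⟩
  rcases hor with ⟨h1, h2⟩ | ⟨h1, h2⟩
  · exact Or.inl ⟨by rw [hfu]; exact h1, by rw [hfv]; exact h2⟩
  · exact Or.inr ⟨by rw [hfu]; exact h1, by rw [hfv]; exact h2⟩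

end Wrd

section Graph
variable {V : Type*} [Fintype V] [DecidableEq V]

open Classical in
noncomputable def AP (G : SimpleGraph V) : ℕ :=
  ((Finset.univ : Finset (V × V)).filter (fun p => G.Adj p.1 p.2)).card

open Classical in
noncomputable def crossP (G : SimpleGraph V) (P : Finpartition (Finset.univ : Finset V)) :
    Finset (V × V) :=
  (Finset.univ : Finset (V × V)).filter (fun p => G.Adj p.1 p.2 ∧ P.part p.1 ≠ P.part p.2)

open Classical in
noncomputable def withinP (G : SimpleGraph V) (M : Finset V) : Finset (V × V) :=
  (M ×ˢ M).filter (fun p => G.Adj p.1 p.2)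

open Classical in
noncomputable def Dtot (G : SimpleGraph V) (P : Finpartition (Finset.univ : Finset V)) :
    Finset (Finset V × Finset V) :=
  (P.parts ×ˢ P.parts).filter (fun q => q.1 ≠ q.2 ∧ ∃ u ∈ q.1, ∃ v ∈ q.2, G.Adj u v)

lemma AP_eq_twice (G : SimpleGraph V) : (AP G : ℕ) = 2 * G.edgeSet.ncard := by
  classical
  have h1 : AP G = Fintype.card G.Dart := by
    rw [AP]
    rw [← Fintype.card_subtype]
    apply Fintype.card_congr
    exact {
      toFun := fun (d : {x : V × V // G.Adj x.1 x.2}) => SimpleGraph.Dart.mk d.1 d.2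
      invFun := fun (d : G.Dart) => ⟨d.toProd, d.adj⟩
      left_inv := fun d => rfl
      right_inv := fun d => rfl }
  rw [h1, SimpleGraph.dart_card_eq_twice_card_edges]
  congr 1
  rw [SimpleGraph.edgeFinset, ← Set.ncard_eq_toFinset_card']

variable (G : SimpleGraph V) (P : Finpartition (Finset.univ : Finset V))

lemma pt_eq_of_mem {M : Finset V} {v : V} (hM : M ∈ P.parts) (hv : v ∈ M) : P.part v = M :=
  (P.eq_of_mem_parts hM (P.part_mem.2 (Finset.mem_univ v)) hv (P.mem_part (Finset.mem_univ v))).symm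

lemma module_all (hmod : ∀ M ∈ P.parts, IsModule G (↑M : Set V))
    {i j : Finset V} (hi : i ∈ P.parts) (hj : j ∈ P.parts) (hne : i ≠ j)
    {u₀ v₀ : V} (hu₀ : u₀ ∈ i) (hv₀ : v₀ ∈ j) (hadj : G.Adj u₀ v₀) :
    ∀ u ∈ i, ∀ v ∈ j, G.Adj u v := by
  intro u hu v hv
  have hvnotin : v₀ ∉ (↑i : Set V) := by
    intro hcon
    rw [Finset.mem_coe] at hcon
    exact hne (P.eq_of_mem_parts hi hj hcon hv₀)
  have h1 : G.Adj u v₀ := by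
    have := hmod i hi u₀ (Finset.mem_coe.2 hu₀) u (Finset.mem_coe.2 hu) v₀ hvnotin
    exact this.1 hadj
  have hunotin : u ∉ (↑j : Set V) := by
    intro hcon
    rw [Finset.mem_coe] at hcon
    exact hne (P.eq_of_mem_parts hi hj hu hcon)
  have h2 : G.Adj v u := by
    have := hmod j hj v₀ (Finset.mem_coe.2 hv₀) v (Finset.mem_coe.2 hv) u hunotin
    exact this.1 h1.symm
  exact h2.symm

lemma cross_ge (hmod : ∀ M ∈ P.parts, IsModule G (↑M : Set V)) :
    ∑ q ∈ Dtot G P, q.1.card * q.2.card ≤ (crossP G P).card := by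
  classical
  have hall : ∀ q ∈ Dtot G P, q.1 ∈ P.parts ∧ q.2 ∈ P.parts ∧ q.1 ≠ q.2
      ∧ ∀ u ∈ q.1, ∀ v ∈ q.2, G.Adj u v := by
    intro q hq
    rw [Dtot, Finset.mem_filter, Finset.mem_product] at hq
    obtain ⟨⟨h1, h2⟩, hne, u₀, hu₀, v₀, hv₀, hadj⟩ := hq
    exact ⟨h1, h2, hne, module_all G P hmod h1 h2 hne hu₀ hv₀ hadj⟩
  have hdisj : ∀ q ∈ Dtot G P, ∀ q' ∈ Dtot G P, q ≠ q' →
      Disjoint (q.1 ×ˢ q.2) (q'.1 ×ˢ q'.2) := by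
    intro q hq q' hq' hne
    rw [Finset.disjoint_left]
    rintro ⟨u, v⟩ huv huv'
    rw [Finset.mem_product] at huv huv'
    have e1 : q.1 = q'.1 := P.eq_of_mem_parts (hall q hq).1 (hall q' hq').1 huv.1 huv'.1
    have e2 : q.2 = q'.2 := P.eq_of_mem_parts (hall q hq).2.1 (hall q' hq').2.1 huv.2 huv'.2
    exact hne (Prod.ext e1 e2)
  have hsub : (Dtot G P).biUnion (fun q => q.1 ×ˢ q.2) ⊆ crossP G P := by
    intro p hp
    rw [Finset.mem_biUnion] at hp
    obtain ⟨q, hq, hpq⟩ := hp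
    rw [Finset.mem_product] at hpq
    obtain ⟨h1, h2, hne, hadj⟩ := hall q hq
    rw [crossP, Finset.mem_filter]
    refine ⟨Finset.mem_univ _, hadj _ hpq.1 _ hpq.2, ?_⟩
    rw [pt_eq_of_mem P h1 hpq.1, pt_eq_of_mem P h2 hpq.2]
    exact hne
  calc ∑ q ∈ Dtot G P, q.1.card * q.2.card
      = ∑ q ∈ Dtot G P, (q.1 ×ˢ q.2).card := by
        exact Finset.sum_congr rfl (fun q _ => (Finset.card_product _ _).symm)
    _ = ((Dtot G P).biUnion (fun q => q.1 ×ˢ q.2)).card := (Finset.card_biUnion hdisj).symm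
    _ ≤ (crossP G P).card := Finset.card_le_card hsub

lemma ap_split :
    (∑ M ∈ P.parts, (withinP G M).card) + (crossP G P).card ≤ AP G := by
  classical
  have hdisj : ∀ M ∈ P.parts, ∀ M' ∈ P.parts, M ≠ M' →
      Disjoint (withinP G M) (withinP G M') := by
    intro M hM M' hM' hne
    rw [Finset.disjoint_left]
    rintro ⟨u, v⟩ huv huv'
    rw [withinP, Finset.mem_filter, Finset.mem_product] at huv huv'
    exact hne (P.eq_of_mem_parts hM hM' huv.1.1 huv'.1.1)
  have hdisj2 : Disjoint (P.parts.biUnion (fun M => withinP G M)) (crossP G P) := by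
    rw [Finset.disjoint_left]
    rintro ⟨u, v⟩ huv huv'
    rw [Finset.mem_biUnion] at huv
    obtain ⟨M, hM, hmem⟩ := huv
    rw [withinP, Finset.mem_filter, Finset.mem_product] at hmem
    rw [crossP, Finset.mem_filter] at huv'
    apply huv'.2.2
    rw [pt_eq_of_mem P hM hmem.1.1, pt_eq_of_mem P hM hmem.1.2]
  have hsub : (P.parts.biUnion (fun M => withinP G M)) ∪ crossP G P
      ⊆ (Finset.univ : Finset (V × V)).filter (fun p => G.Adj p.1 p.2) := by
    intro p hp
    rw [Finset.mem_union] at hp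
    rcases hp with hp | hp
    · rw [Finset.mem_biUnion] at hp
      obtain ⟨M, hM, hmem⟩ := hp
      rw [withinP, Finset.mem_filter] at hmem
      exact Finset.mem_filter.2 ⟨Finset.mem_univ _, hmem.2⟩
    · rw [crossP, Finset.mem_filter] at hp
      exact Finset.mem_filter.2 ⟨Finset.mem_univ _, hp.2.1⟩
  calc (∑ M ∈ P.parts, (withinP G M).card) + (crossP G P).card
      = (P.parts.biUnion (fun M => withinP G M)).card + (crossP G P).card := by
        rw [Finset.card_biUnion hdisj]
    _ = ((P.parts.biUnion (fun M => withinP G M)) ∪ crossP G P).card := by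
        rw [Finset.card_union_of_disjoint hdisj2]
    _ ≤ ((Finset.univ : Finset (V × V)).filter (fun p => G.Adj p.1 p.2)).card :=
        Finset.card_le_card hsub
    _ = AP G := by rw [AP]

lemma ap_induce (M : Finset V) :
    AP (G.induce (↑M : Set V)) = (withinP G M).card := by
  classical
  rw [AP, withinP]
  apply Finset.card_bij (fun p _ => ((p.1 : V), (p.2 : V)))
  · rintro ⟨a, b⟩ hab
    rw [Finset.mem_filter] at hab
    rw [Finset.mem_filter, Finset.mem_product]
    refine ⟨⟨?_, ?_⟩, hab.2⟩
    · exact Finset.mem_coe.1 a.2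
    · exact Finset.mem_coe.1 b.2
  · rintro ⟨a, b⟩ h1 ⟨a', b'⟩ h2 heq
    simp only [Prod.mk.injEq] at heq
    exact Prod.ext (Subtype.ext heq.1) (Subtype.ext heq.2)
  · rintro ⟨u, v⟩ huv
    rw [Finset.mem_filter, Finset.mem_product] at huv
    refine ⟨(⟨u, Finset.mem_coe.2 huv.1.1⟩, ⟨v, Finset.mem_coe.2 huv.1.2⟩), ?_, rfl⟩
    rw [Finset.mem_filter]
    exact ⟨Finset.mem_univ _, huv.2⟩

end Graph

section Helpers
variable {α : Type*}

lemma list_sum_mul_le (L : List α) (x y : α → ℕ) :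
    (L.map (fun l => x l * y l)).sum ≤ (L.map x).sum * (L.map y).sum := by
  induction L with
  | nil => simp
  | cons a t ih =>
    simp only [List.map_cons, List.sum_cons]
    nlinarith [ih, Nat.zero_le ((t.map x).sum), Nat.zero_le ((t.map y).sum),
      Nat.zero_le (x a), Nat.zero_le (y a)]

lemma list_finset_swap {κ : Type*} (L : List α) (F : Finset κ) (g : α → κ → ℕ) :
    (L.map (fun l => ∑ q ∈ F, g l q)).sum = ∑ q ∈ F, (L.map (fun l => g l q)).sum := by
  induction L with
  | nil => simp
  | cons a t ih => simp [ih, Finset.sum_add_distrib]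

lemma sublist_flatten {L1 L2 : List (List α)} (h : L1 <+ L2) :
    L1.flatten <+ L2.flatten := by
  induction h with
  | slnil => simp
  | cons l _ ih =>
    simp only [List.flatten_cons]
    exact ih.trans (List.sublist_append_right _ _)
  | cons_cons l _ ih =>
    simp only [List.flatten_cons]
    exact ih.append_left l

lemma list_cast_sum_map (L : List α) (c : α → ℕ) :
    (((L.map c).sum : ℕ) : ℝ) = (L.map (fun l => (c l : ℝ))).sum := by
  induction L with
  | nil => simp
  | cons a t ih => simp [ih]

lemma list_sum_flatMap {β : Type*} (S : List α) (F : α → List β) (g : β → ℝ) :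
    ((S.flatMap F).map g).sum = (S.map (fun l => ((F l).map g).sum)).sum := by
  induction S with
  | nil => simp
  | cons a t ih => simp [List.flatMap_cons, ih]

lemma zp_ne_nil_of_len {w : List α} (h : 2 ≤ w.length) : zp w ≠ [] := by
  rcases w with _ | ⟨a, t⟩
  · simp at h
  rcases t with _ | ⟨b, t'⟩
  · simp at h
  · rw [zp_cons_cons]; simp

end Helpers

section Main
variable {V : Type*} [Fintype V] [DecidableEq V]

lemma flatten_flatMap_runs (pt : V → Finset V) (S : List (List V)) :
    (S.flatMap (runs pt)).flatten = S.flatten := by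
  induction S with
  | nil => rfl
  | cons l t ih => simp [List.flatMap_cons, ih, flatten_runs]

lemma parts_count (P : Finpartition (Finset.univ : Finset V)) (S : List (List V))
    (hnd : S.flatten.Nodup) (hcov : ∀ v : V, v ∈ S.flatten) {i : Finset V} (hi : i ∈ P.parts) :
    (S.map (fun l => l.countP (fun x => P.part x = i))).sum = i.card := by
  rw [← List.countP_flatten, List.countP_eq_length_filter]
  have hnodupf : (S.flatten.filter (fun x => decide (P.part x = i))).Nodup := hnd.filter _
  rw [← List.toFinset_card_of_nodup hnodupf]
  congr 1
  ext x
  simp only [List.mem_toFinset, List.mem_filter, decide_eq_true_eq]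
  constructor
  · rintro ⟨-, h⟩
    rw [← h]
    exact P.mem_part (Finset.mem_univ x)
  · intro hx
    exact ⟨hcov x, pt_eq_of_mem P hi hx⟩

open Classical in
lemma trivial_bound (G : SimpleGraph V) (d : ℕ)
    (hcard : Fintype.card V ≤ 1) (S : List (List V)) (hnd : S.flatten.Nodup) :
    (S.map (fun l => (l.length : ℝ) * Real.log l.length)).sum
      ≤ 2 * Real.log d * (AP G : ℝ) := by
  have hterm : ∀ l ∈ S, (l.length : ℝ) * Real.log l.length ≤ (fun _ => (0:ℝ)) l := by
    intro l hl
    have hsub : l <+ S.flatten := List.sublist_flatten_of_mem hl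
    have h2 : S.flatten.length ≤ Fintype.card V := by
      rw [← List.toFinset_card_of_nodup hnd, ← Finset.card_univ]
      exact Finset.card_le_card (Finset.subset_univ _)
    have h1 : l.length ≤ 1 := le_trans hsub.length_le (le_trans h2 hcard)
    have : l.length = 0 ∨ l.length = 1 := by omega
    rcases this with h | h <;> simp [h]
  have hΦ := List.sum_le_sum hterm
  rw [list_sum_map_const'] at hΦ
  simp only [mul_zero] at hΦ
  have : (0:ℝ) ≤ 2 * Real.log d * (AP G : ℝ) := by
    apply mul_nonneg (mul_nonneg (by norm_num) (Real.log_natCast_nonneg d)) (Nat.cast_nonneg _)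
  linarith

end Main

section MainInduction

lemma main_ind (d : ℕ) (hd : 2 ≤ d) :
    ∀ (fuel : ℕ) (V : Type) (iF : Fintype V) (iD : DecidableEq V) (G : SimpleGraph V),
      MWleAux d fuel V G →
      ∀ S : List (List V), S.flatten.Nodup → (∀ v : V, v ∈ S.flatten) →
        (∀ l ∈ S, l.Chain' G.Adj) →
        (S.map (fun l => (l.length : ℝ) * Real.log l.length)).sum
          ≤ 2 * Real.log d * (AP G : ℝ) := by
  intro fuel
  induction fuel with
  | zero =>
    intro V iF iD G hmw S hnd hcov hch
    exact trivial_bound G d hmw S hnd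
  | succ fuel ih =>
    intro V iF iD G hmw S hnd hcov hch
    rw [MWleAux] at hmw
    rcases hmw with hcard | ⟨P, hP2, hmod, hquot, hrec⟩
    · exact trivial_bound G d hcard S hnd
    classical
    have hlogd : (0:ℝ) ≤ Real.log d := Real.log_natCast_nonneg d
    set pt : V → Finset V := fun v => P.part v with hptdef
    -- labels of words are parts
    have hlabs : ∀ l ∈ S, labs (wrd pt l) ⊆ P.parts := by
      intro l hl i hi
      obtain ⟨x, hx, hfx⟩ := mem_labs_wrd hi
      rw [← hfx]
      exact P.part_mem.2 (Finset.mem_univ x)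
    -- the domination lemma
    have hdom : ∀ l ∈ S, ∀ N : Finset V → Finset (Finset V),
        (∀ i ∈ labs (wrd pt l), N i ⊆ labs (wrd pt l)) →
        (∀ i ∈ labs (wrd pt l), ∀ j ∈ N i, (i, j) ∈ Dtot G P) →
        ∑ i ∈ labs (wrd pt l), ((am (wrd pt l) i : ℝ) * ∑ j ∈ N i, (am (wrd pt l) j : ℝ))
          ≤ ((∑ q ∈ Dtot G P, am (wrd pt l) q.1 * am (wrd pt l) q.2 : ℕ) : ℝ) := by
      intro l hl N hNsub hND
      have hcast : ((∑ q ∈ Dtot G P, am (wrd pt l) q.1 * am (wrd pt l) q.2 : ℕ) : ℝ)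
          = ∑ q ∈ Dtot G P, (am (wrd pt l) q.1 : ℝ) * (am (wrd pt l) q.2 : ℝ) := by
        push_cast; rfl
      rw [hcast]
      set w := wrd pt l
      set E : Finset (Finset V × Finset V)
        := (labs w ×ˢ labs w).filter (fun q => q.2 ∈ N q.1) with hEdef
      have hEsum : ∑ q ∈ E, (am w q.1 : ℝ) * (am w q.2 : ℝ)
          = ∑ i ∈ labs w, ((am w i : ℝ) * ∑ j ∈ N i, (am w j : ℝ)) := by
        rw [hEdef, Finset.sum_filter, Finset.sum_product]
        apply Finset.sum_congr rfl
        intro i hi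
        dsimp only
        rw [Finset.sum_ite_mem, Finset.inter_eq_right.2 (hNsub i hi), Finset.mul_sum]
      rw [← hEsum]
      apply Finset.sum_le_sum_of_subset_of_nonneg
      · intro q hq
        rw [hEdef, Finset.mem_filter, Finset.mem_product] at hq
        exact hND q.1 hq.1.1 q.2 hq.2
      · intro q _ _
        positivity
    -- the key per-list deficit bound
    have hkey : ∀ l ∈ S,
        (tot (wrd pt l) : ℝ) * Real.log (tot (wrd pt l))
            - ((wrd pt l).map (fun e => (e.2:ℝ) * Real.log e.2)).sum
          ≤ ((∑ q ∈ Dtot G P, am (wrd pt l) q.1 * am (wrd pt l) q.2 : ℕ) : ℝ)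
            * (2 * Real.log d) := by
      intro l hl
      rcases hquot with hpd | hcomp | hempty
      · -- parts.card ≤ d : use word1 with nbrs
        have hs : (labs (wrd pt l)).card ≤ d :=
          le_trans (Finset.card_le_card (hlabs l hl)) hpd
        have h1 := word1 d hd (wrd pt l) (wrd_pos pt l) (wrd_chain pt l) hs
        have h2 := hdom l hl (nbrs (wrd pt l)) (fun i _ => Finset.filter_subset _ _) ?_
        · refine le_trans h1 ?_
          nlinarith [h2, Real.log_natCast_nonneg d]
        · intro i hi j hj
          rw [nbrs, Finset.mem_filter] at hj
          obtain ⟨hjl, hjne, hadj⟩ := hj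
          obtain ⟨u, hu, v, hv, hor, hR⟩ := wrd_adj pt l (hch l hl) hadj
          rw [Dtot, Finset.mem_filter, Finset.mem_product]
          refine ⟨⟨hlabs l hl hi, hlabs l hl hjl⟩, fun hcon => hjne hcon.symm, ?_⟩
          rcases hor with ⟨h1', h2'⟩ | ⟨h1', h2'⟩
          · exact ⟨u, by rw [← h1']; exact P.mem_part (Finset.mem_univ u),
              v, by rw [← h2']; exact P.mem_part (Finset.mem_univ v), hR⟩
          · exact ⟨v, by rw [← h2']; exact P.mem_part (Finset.mem_univ v),
              u, by rw [← h1']; exact P.mem_part (Finset.mem_univ u), hR.symm⟩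
      · -- complete quotient : use word2
        have h1 := word2 d hd (wrd pt l) (wrd_pos pt l) (wrd_chain pt l)
        have h2 := hdom l hl (fun i => (labs (wrd pt l)).erase i)
          (fun i _ => Finset.erase_subset _ _) ?_
        · refine le_trans h1 ?_
          nlinarith [h2, Real.log_natCast_nonneg d]
        · intro i hi j hj
          have hjne := (Finset.mem_erase.1 hj).1
          have hjl := (Finset.mem_erase.1 hj).2
          have hip : i ∈ P.parts := hlabs l hl hi
          have hjp : j ∈ P.parts := hlabs l hl hjl
          obtain ⟨u, hu⟩ := P.nonempty_of_mem_parts hip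
          obtain ⟨v, hv⟩ := P.nonempty_of_mem_parts hjp
          rw [Dtot, Finset.mem_filter, Finset.mem_product]
          exact ⟨⟨hip, hjp⟩, fun hcon => hjne hcon.symm,
            u, hu, v, hv, hcomp i hip j hjp (fun hcon => hjne hcon.symm) u hu v hv⟩
      · -- empty quotient : labels card ≤ 1, use word1
        have hzp : zp (wrd pt l) = [] := by
          by_contra hne
          obtain ⟨q, hq⟩ := List.exists_mem_of_ne_nil _ hne
          have hlabne := wrd_chain pt l q hq
          rw [wrd, zp_map'] at hq
          obtain ⟨q', hq', rfl⟩ := List.mem_map.1 hq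
          obtain ⟨u, hu, v, hv, hR⟩ := runs_bdry pt l (hch l hl) q' hq'
          have hq'1 : q'.1 ∈ runs pt l := (mem_of_mem_zp hq').1
          have hq'2 : q'.2 ∈ runs pt l := (mem_of_mem_zp hq').2
          have hfu : pt u = lab pt q'.1 := runs_const pt l q'.1 hq'1 u hu
          have hfv : pt v = lab pt q'.2 := runs_const pt l q'.2 hq'2 v hv
          have hne2 : pt u ≠ pt v := by
            rw [hfu, hfv]
            exact hlabne
          exact hempty (pt u) (P.part_mem.2 (Finset.mem_univ u))
            (pt v) (P.part_mem.2 (Finset.mem_univ v)) hne2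
            u (P.mem_part (Finset.mem_univ u)) v (P.mem_part (Finset.mem_univ v)) hR
        have hlen : (wrd pt l).length ≤ 1 := by
          by_contra hcon
          exact zp_ne_nil_of_len (by omega) hzp
        have hs : (labs (wrd pt l)).card ≤ d := by
          have h1 : (labs (wrd pt l)).card ≤ ((wrd pt l).map Prod.fst).length :=
            List.toFinset_card_le _
          rw [List.length_map] at h1
          omega
        have h1 := word1 d hd (wrd pt l) (wrd_pos pt l) (wrd_chain pt l) hs
        have h2 := hdom l hl (nbrs (wrd pt l)) (fun i _ => Finset.filter_subset _ _) ?_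
        · refine le_trans h1 ?_
          nlinarith [h2, Real.log_natCast_nonneg d]
        · intro i hi j hj
          rw [nbrs, Finset.mem_filter] at hj
          obtain ⟨hjl, hjne, hadj⟩ := hj
          exfalso
          obtain ⟨q, hq, -⟩ := hadj
          rw [hzp] at hq
          simp at hq
    -- Φ decomposition per list
    have hdecomp : ∀ l : List V, (l.length : ℝ) * Real.log l.length
        = ((tot (wrd pt l) : ℝ) * Real.log (tot (wrd pt l))
            - ((wrd pt l).map (fun e => (e.2:ℝ) * Real.log e.2)).sum)
          + ((runs pt l).map (fun r => (r.length:ℝ) * Real.log r.length)).sum := by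
      intro l
      rw [← wrd_logsum pt l, wrd_tot pt l]
      ring
    -- crossP bound for the deficit part
    have hcount : ((S.map (fun l => ∑ q ∈ Dtot G P,
        am (wrd pt l) q.1 * am (wrd pt l) q.2)).sum : ℕ) ≤ (crossP G P).card := by
      rw [list_finset_swap]
      calc ∑ q ∈ Dtot G P, (S.map (fun l => am (wrd pt l) q.1 * am (wrd pt l) q.2)).sum
          ≤ ∑ q ∈ Dtot G P, q.1.card * q.2.card := by
            apply Finset.sum_le_sum
            intro q hq
            rw [Dtot, Finset.mem_filter, Finset.mem_product] at hq
            calc (S.map (fun l => am (wrd pt l) q.1 * am (wrd pt l) q.2)).sum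
                ≤ (S.map (fun l => am (wrd pt l) q.1)).sum
                  * (S.map (fun l => am (wrd pt l) q.2)).sum :=
                  list_sum_mul_le S _ _
              _ = q.1.card * q.2.card := by
                  have e1 : (S.map (fun l => am (wrd pt l) q.1)).sum = q.1.card := by
                    have : (fun l => am (wrd pt l) q.1)
                        = (fun l : List V => l.countP (fun x => pt x = q.1)) := by
                      funext l; exact wrd_am pt l q.1
                    rw [this]
                    exact parts_count P S hnd hcov hq.1.1
                  have e2 : (S.map (fun l => am (wrd pt l) q.2)).sum = q.2.card := by
                    have : (fun l => am (wrd pt l) q.2)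
                        = (fun l : List V => l.countP (fun x => pt x = q.2)) := by
                      funext l; exact wrd_am pt l q.2
                    rw [this]
                    exact parts_count P S hnd hcov hq.1.2
                  rw [e1, e2]
        _ ≤ (crossP G P).card := cross_ge G P hmod
    -- within bound : the recursive part
    have hwithin : ((S.flatMap (runs pt)).map
          (fun r => (r.length:ℝ) * Real.log r.length)).sum
        ≤ ∑ M ∈ P.parts, 2 * Real.log d * ((AP (G.induce (↑M : Set V)) : ℕ) : ℝ) := by
      have hKmem : ∀ r ∈ S.flatMap (runs pt), lab pt r ∈ P.parts := by
        intro r hr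
        obtain ⟨l, hl, hrl⟩ := List.mem_flatMap.1 hr
        obtain ⟨x, hx⟩ := List.exists_mem_of_ne_nil r (runs_ne_nil pt l r hrl)
        rw [← runs_const pt l r hrl x hx]
        exact P.part_mem.2 (Finset.mem_univ x)
      rw [list_fiber_sum (S.flatMap (runs pt)) (lab pt) P.parts hKmem]
      apply Finset.sum_le_sum
      intro M hM
      set SM := (S.flatMap (runs pt)).filter (fun r => lab pt r = M) with hSMdef
      have hSMmem : ∀ r ∈ SM, ∀ x ∈ r, x ∈ (↑M : Set V) := by
        intro r hr x hx
        have h1 : lab pt r = M := by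
          have := List.of_mem_filter hr
          simpa using this
        have h2 : r ∈ S.flatMap (runs pt) := List.mem_of_mem_filter hr
        obtain ⟨l, hl, hrl⟩ := List.mem_flatMap.1 h2
        have h3 : pt x = lab pt r := runs_const pt l r hrl x hx
        rw [Finset.mem_coe, ← h1, ← h3]
        exact P.mem_part (Finset.mem_univ x)
      set SM' : List (List ↥(↑M : Set V))
        := SM.attach.map (fun rr => rr.1.attachWith (· ∈ (↑M : Set V)) (hSMmem rr.1 rr.2))
        with hSM'def
      have hval : SM'.flatten.map Subtype.val = SM.flatten := by
        rw [List.map_flatten, hSM'def, List.map_map]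
        congr 1
        have : ((List.map Subtype.val) ∘ fun rr : {x // x ∈ SM}
            => rr.1.attachWith (· ∈ (↑M : Set V)) (hSMmem rr.1 rr.2))
            = fun rr : {x // x ∈ SM} => rr.1 := by
          funext rr
          exact List.attachWith_map_subtype_val _
        rw [this]
        rw [List.attach_map_val (l := SM) (f := fun r => r)]
        exact List.map_id _
      have hSMflat_nodup : SM.flatten.Nodup := by
        have h1 : SM <+ S.flatMap (runs pt) := List.filter_sublist
        have h2 : SM.flatten <+ (S.flatMap (runs pt)).flatten := sublist_flatten h1
        rw [flatten_flatMap_runs] at h2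
        exact h2.nodup hnd
      have hnd' : SM'.flatten.Nodup := by
        apply List.Nodup.of_map Subtype.val
        rw [hval]
        exact hSMflat_nodup
      have hcov' : ∀ y : ↥(↑M : Set V), y ∈ SM'.flatten := by
        intro y
        have hyM : (y : V) ∈ M := y.2
        have h0 : (y : V) ∈ (S.flatMap (runs pt)).flatten := by
          rw [flatten_flatMap_runs]
          exact hcov y
        obtain ⟨r, hr, hyr⟩ := List.mem_flatten.1 h0
        have hlabr : lab pt r = M := by
          obtain ⟨l, hl, hrl⟩ := List.mem_flatMap.1 hr
          rw [← runs_const pt l r hrl _ hyr]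
          exact pt_eq_of_mem P hM hyM
        have hrSM : r ∈ SM := List.mem_filter.2 ⟨hr, by simp [hlabr]⟩
        have hySMflat : (y : V) ∈ SM.flatten := List.mem_flatten.2 ⟨r, hrSM, hyr⟩
        rw [← hval] at hySMflat
        obtain ⟨y', hy', hyy⟩ := List.mem_map.1 hySMflat
        have : y' = y := Subtype.ext hyy
        rw [← this]
        exact hy'
      have hch' : ∀ l' ∈ SM', l'.Chain' (G.induce (↑M : Set V)).Adj := by
        intro l' hl'
        rw [hSM'def] at hl'
        obtain ⟨rr, hrr, rfl⟩ := List.mem_map.1 hl'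
        have h2 : rr.1 ∈ S.flatMap (runs pt) := List.mem_of_mem_filter rr.2
        obtain ⟨l, hl, hrl⟩ := List.mem_flatMap.1 h2
        have hchain_r : rr.1.Chain' G.Adj := runs_chain pt l (hch l hl) rr.1 hrl
        have hmapval : (rr.1.attachWith (· ∈ (↑M : Set V)) (hSMmem rr.1 rr.2)).map Subtype.val
            = rr.1 := List.attachWith_map_subtype_val _
        have := (List.isChain_map (Subtype.val :
            ↥(↑M : Set V) → V)).1 (by rw [hmapval]; exact hchain_r)
        exact this
      have hIH := ih ↥(↑M : Set V) _ _ (G.induce (↑M : Set V)) (hrec M hM) SM' hnd'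
        hcov' hch'
      have hsum_eq : (SM'.map (fun l' => (l'.length : ℝ) * Real.log l'.length)).sum
          = (SM.map (fun r => (r.length:ℝ) * Real.log r.length)).sum := by
        rw [hSM'def, List.map_map]
        have : ((fun l' : List ↥(↑M : Set V) => (l'.length : ℝ) * Real.log l'.length)
            ∘ fun rr : {x // x ∈ SM} => rr.1.attachWith (· ∈ (↑M : Set V)) (hSMmem rr.1 rr.2))
            = fun rr : {x // x ∈ SM} => (rr.1.length : ℝ) * Real.log rr.1.length := by
          funext rr
          simp [List.length_attachWith]
        rw [this]
        rw [List.attach_map_val (l := SM) (f := fun r => (r.length : ℝ) * Real.log r.length)]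
      rw [← hsum_eq]
      exact hIH
    -- assemble
    have hsplit : (S.map (fun l => (l.length : ℝ) * Real.log l.length)).sum
        = (S.map (fun l => (tot (wrd pt l) : ℝ) * Real.log (tot (wrd pt l))
            - ((wrd pt l).map (fun e => (e.2:ℝ) * Real.log e.2)).sum)).sum
          + (S.map (fun l =>
              ((runs pt l).map (fun r => (r.length:ℝ) * Real.log r.length)).sum)).sum := by
      rw [← list_sum_map_add]
      congr 1
      apply List.map_congr_left
      intro l _
      exact hdecomp l
    have hfinal1 : (S.map (fun l => (tot (wrd pt l) : ℝ) * Real.log (tot (wrd pt l))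
            - ((wrd pt l).map (fun e => (e.2:ℝ) * Real.log e.2)).sum)).sum
        ≤ (((crossP G P).card : ℕ) : ℝ) * (2 * Real.log d) := by
      have h1 := List.sum_le_sum hkey
      have h2 : (S.map (fun l =>
          ((∑ q ∈ Dtot G P, am (wrd pt l) q.1 * am (wrd pt l) q.2 : ℕ) : ℝ)
            * (2 * Real.log d))).sum
          = (((S.map (fun l => ∑ q ∈ Dtot G P,
              am (wrd pt l) q.1 * am (wrd pt l) q.2)).sum : ℕ) : ℝ) * (2 * Real.log d) := by
        rw [list_sum_map_mul_right, list_cast_sum_map]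
      rw [h2] at h1
      refine le_trans h1 (mul_le_mul_of_nonneg_right ?_ (by positivity))
      exact_mod_cast hcount
    have hfinal2 : (S.map (fun l =>
          ((runs pt l).map (fun r => (r.length:ℝ) * Real.log r.length)).sum)).sum
        ≤ ∑ M ∈ P.parts, 2 * Real.log d * ((AP (G.induce (↑M : Set V)) : ℕ) : ℝ) := by
      rw [← list_sum_flatMap]
      exact hwithin
    have hap : ∑ M ∈ P.parts, 2 * Real.log d * ((AP (G.induce (↑M : Set V)) : ℕ) : ℝ)
        = 2 * Real.log d * ((∑ M ∈ P.parts, (withinP G M).card : ℕ) : ℝ) := by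
      rw [← Finset.mul_sum]
      congr 1
      push_cast
      apply Finset.sum_congr rfl
      intro M hM
      rw [ap_induce]
    have hlast : (((crossP G P).card : ℕ) : ℝ) * (2 * Real.log d)
         + 2 * Real.log d * ((∑ M ∈ P.parts, (withinP G M).card : ℕ) : ℝ)
        ≤ 2 * Real.log d * ((AP G : ℕ) : ℝ) := by
      have h := ap_split G P
      have hcast : (((∑ M ∈ P.parts, (withinP G M).card) + (crossP G P).card : ℕ) : ℝ)
          ≤ ((AP G : ℕ) : ℝ) := by exact_mod_cast h
      push_cast at hcast ⊢
      nlinarith [hlogd, hcast]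
    calc (S.map (fun l => (l.length : ℝ) * Real.log l.length)).sum
        = _ + _ := hsplit
      _ ≤ (((crossP G P).card : ℕ) : ℝ) * (2 * Real.log d)
          + ∑ M ∈ P.parts, 2 * Real.log d * ((AP (G.induce (↑M : Set V)) : ℕ) : ℝ) :=
          add_le_add hfinal1 hfinal2
      _ = (((crossP G P).card : ℕ) : ℝ) * (2 * Real.log d)
          + 2 * Real.log d * ((∑ M ∈ P.parts, (withinP G M).card : ℕ) : ℝ) := by rw [hap]
      _ ≤ 2 * Real.log d * ((AP G : ℕ) : ℝ) := hlast
end MainInduction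
end Density

/-- A traceable graph on `n` vertices with modular-width at most `d`, `d ≥ 2`,
has at least `(1/4)·n·log_d n` edges. -/
theorem stmt_6 {V : Type} [Fintype V] [DecidableEq V] (G : SimpleGraph V)
    (d : ℕ) (hd : 2 ≤ d) (hmw : MWle d V G) (hG : Traceable G) :
    (1 / 4 : ℝ) * (Fintype.card V : ℝ) * Real.logb d (Fintype.card V) ≤
      (G.edgeSet.ncard : ℝ) := by
  classical
  obtain ⟨u, v, p, hp⟩ := hG
  have hnd : p.support.Nodup := by
    rw [List.nodup_iff_count_le_one]
    intro a
    exact le_of_eq (hp a)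
  have hcov : ∀ x : V, x ∈ p.support := fun x => hp.mem_support x
  set S : List (List V) := [p.support] with hSdef
  have hndS : S.flatten.Nodup := by simpa [hSdef] using hnd
  have hcovS : ∀ x : V, x ∈ S.flatten := by
    intro x
    simpa [hSdef] using hcov x
  have hchS : ∀ l ∈ S, l.Chain' G.Adj := by
    intro l hl
    rw [hSdef] at hl
    simp at hl
    rw [hl]
    exact p.isChain_adj_support
  have hmain := Density.main_ind d hd (Fintype.card V) V _ _ G hmw S hndS hcovS hchS
  have hlen : p.support.length = Fintype.card V := by
    rw [← List.toFinset_card_of_nodup hnd, ← Finset.card_univ]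
    congr 1
    ext x
    simp [hcov x]
  have hΦ : (S.map (fun l => (l.length : ℝ) * Real.log l.length)).sum
      = (Fintype.card V : ℝ) * Real.log (Fintype.card V) := by
    rw [hSdef]
    simp [hlen]
  rw [hΦ] at hmain
  have hAP := Density.AP_eq_twice G
  rw [hAP] at hmain
  have hld : (0:ℝ) < Real.log d := Real.log_pos (by exact_mod_cast hd)
  have h4 : (Fintype.card V : ℝ) * Real.log (Fintype.card V)
      ≤ 4 * Real.log d * (G.edgeSet.ncard : ℝ) := by
    push_cast at hmain
    nlinarith [hmain]
  rw [Real.logb]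
  have hrw : (1 / 4 : ℝ) * (Fintype.card V : ℝ)
      * (Real.log (Fintype.card V) / Real.log d)
      = ((Fintype.card V : ℝ) * Real.log (Fintype.card V)) / (4 * Real.log d) := by
    field_simp
  rw [hrw, div_le_iff₀ (by positivity)]
  nlinarith [h4]
end
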